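/- arXiv:0712.0094 — 3 statements merged into one kernel-verified Lean document; each statement's English description precedes it below -/
import Mathlib

section
/- For every t ≥ 0 the smooth solution u of the diffusive–dispersive equation satisfies the energy identity ∫_ℝ u(x,t)² dx + 2ε ∫₀ᵗ ∫_ℝ (∂_x u(x,s))² dx ds = ∫_ℝ u₀(x)² dx (identity (2.8) of the paper). -/
open MeasureTheory Filter Set Topology
open scoped ContDiff

lemma my_sq_tendsto_bot : Tendsto (fun x : ℝ => x^2) atBot atTop := by
  have h := (tendsto_pow_atTop (α := ℝ) (n := 2) (by norm_num)).comp tendsto_neg_atBot_atTop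
  have : ((fun x : ℝ => x ^ 2) ∘ fun x : ℝ => -x) = fun x : ℝ => x ^ 2 := by
    funext x; simp [Function.comp]
  rwa [this] at h

lemma my_inv_tendsto_top : Tendsto (fun x : ℝ => (1 + x^2)⁻¹) atTop (𝓝 0) :=
  tendsto_inv_atTop_zero.comp (tendsto_atTop_add_const_left _ 1 (tendsto_pow_atTop (by norm_num)))

lemma my_inv_tendsto_bot : Tendsto (fun x : ℝ => (1 + x^2)⁻¹) atBot (𝓝 0) :=
  tendsto_inv_atTop_zero.comp (tendsto_atTop_add_const_left _ 1 my_sq_tendsto_bot)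

lemma my_decay_tendsto_top {g : ℝ → ℝ} {C : ℝ} (h : ∀ x, |g x| ≤ C * (1 + x^2)⁻¹) :
    Tendsto g atTop (𝓝 0) := by
  apply squeeze_zero_norm (fun x => h x)
  simpa using my_inv_tendsto_top.const_mul C

lemma my_decay_tendsto_bot {g : ℝ → ℝ} {C : ℝ} (h : ∀ x, |g x| ≤ C * (1 + x^2)⁻¹) :
    Tendsto g atBot (𝓝 0) := by
  apply squeeze_zero_norm (fun x => h x)
  simpa using my_inv_tendsto_bot.const_mul C

lemma my_integral_deriv_eq_zero {g g' : ℝ → ℝ}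
    (hg : ∀ x, HasDerivAt g (g' x) x) (hint : Integrable g')
    (htop : Tendsto g atTop (𝓝 0)) (hbot : Tendsto g atBot (𝓝 0)) :
    ∫ x, g' x = 0 := by
  have h1 : ∫ x in Set.Ioi (0:ℝ), g' x = 0 - g 0 :=
    MeasureTheory.integral_Ioi_of_hasDerivAt_of_tendsto' (fun x _ => hg x)
      hint.integrableOn htop
  have h2 : ∫ x in Set.Iic (0:ℝ), g' x = g 0 - 0 :=
    MeasureTheory.integral_Iic_of_hasDerivAt_of_tendsto' (fun x _ => hg x)
      hint.integrableOn hbot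
  rw [← intervalIntegral.integral_Iic_add_Ioi (b := (0:ℝ)) hint.integrableOn hint.integrableOn,
    h1, h2]
  ring

lemma my_decay_integrable {g : ℝ → ℝ} (hg : Continuous g) {C : ℝ}
    (h : ∀ x, |g x| ≤ C * (1 + x^2)⁻¹) : Integrable g := by
  refine ((integrable_inv_one_add_sq).const_mul C).mono' hg.aestronglyMeasurable ?_
  exact ae_of_all _ fun x => by simpa [Real.norm_eq_abs] using h x



lemma my_key_step (f : ℝ → ℝ) (hf : ContDiff ℝ (⊤ : ℕ∞) f) (c eps dlt : ℝ)
    (hc : ∀ w : ℝ, |deriv f w| ≤ c)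
    (v : ℝ → ℝ) (hv : ContDiff ℝ ∞ v) (C : ℝ)
    (h0 : ∀ x : ℝ, |v x| ≤ C * (1 + x^2)⁻¹)
    (h1 : ∀ x : ℝ, |deriv v x| ≤ C * (1 + x^2)⁻¹)
    (h2 : ∀ x : ℝ, |deriv (deriv v) x| ≤ C * (1 + x^2)⁻¹)
    (h3 : ∀ x : ℝ, |deriv (deriv (deriv v)) x| ≤ C * (1 + x^2)⁻¹) :
    ∫ x : ℝ, 2 * v x * (eps * iteratedDeriv 2 v x + dlt * iteratedDeriv 3 v x
        - deriv f (v x) * deriv v x)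
      = -(2*eps) * ∫ x : ℝ, (deriv v x)^2 := by
  set v1 := deriv v with hv1def
  set v2 := deriv v1 with hv2def
  set v3 := deriv v2 with hv3def
  have hC : 0 ≤ C := by have := (abs_nonneg (v 0)).trans (h0 0); simpa using this
  have hcnn : 0 ≤ c := (abs_nonneg _).trans (hc 0)
  have hinv_le_one : ∀ x : ℝ, (1 + x^2)⁻¹ ≤ 1 := by
    intro x
    rw [inv_le_one_iff₀]
    right; nlinarith [sq_nonneg x]
  have hinv_nonneg : ∀ x : ℝ, (0:ℝ) ≤ (1 + x^2)⁻¹ := by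
    intro x; positivity
  have hb0 : ∀ x, |v x| ≤ C := fun x => (h0 x).trans (by
    nlinarith [hinv_le_one x, hinv_nonneg x])
  have hb1 : ∀ x, |v1 x| ≤ C := fun x => (h1 x).trans (by
    nlinarith [hinv_le_one x, hinv_nonneg x])
  -- smoothness chain
  have hv1s : ContDiff ℝ ∞ v1 := (contDiff_infty_iff_deriv.mp hv).2
  have hv2s : ContDiff ℝ ∞ v2 := (contDiff_infty_iff_deriv.mp hv1s).2
  have hv3s : ContDiff ℝ ∞ v3 := (contDiff_infty_iff_deriv.mp hv2s).2
  have hone : (1 : WithTop ℕ∞) ≤ ∞ := by norm_num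
  have hvd : ∀ x, HasDerivAt v (v1 x) x := fun x =>
    ((hv.differentiable (by simp)) x).hasDerivAt
  have hv1d : ∀ x, HasDerivAt v1 (v2 x) x := fun x =>
    ((hv1s.differentiable (by simp)) x).hasDerivAt
  have hv2d : ∀ x, HasDerivAt v2 (v3 x) x := fun x =>
    ((hv2s.differentiable (by simp)) x).hasDerivAt
  have e2 : iteratedDeriv 2 v = v2 := by
    rw [hv2def, hv1def]
    simp [iteratedDeriv_succ, iteratedDeriv_one]
  have e3 : iteratedDeriv 3 v = v3 := by
    rw [hv3def, hv2def, hv1def]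
    simp [iteratedDeriv_succ, iteratedDeriv_one]
  -- integrability of products
  have prodbd : ∀ (a b : ℝ → ℝ), (∀ x, |a x| ≤ C) → (∀ x, |b x| ≤ C * (1+x^2)⁻¹) →
      ∀ x, |a x * b x| ≤ (C*C) * (1+x^2)⁻¹ := by
    intro a b ha hb x
    rw [abs_mul]
    calc |a x| * |b x| ≤ C * (C * (1+x^2)⁻¹) := by
          apply mul_le_mul (ha x) (hb x) (abs_nonneg _) hC
      _ = (C*C) * (1+x^2)⁻¹ := by ring
  have J1 : Integrable (fun x => v x * v2 x) :=
    my_decay_integrable (hv.continuous.mul hv2s.continuous) (prodbd v v2 hb0 h2)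
  have J2 : Integrable (fun x => v x * v3 x) :=
    my_decay_integrable (hv.continuous.mul hv3s.continuous) (prodbd v v3 hb0 h3)
  have Jsq : Integrable (fun x => v1 x * v1 x) :=
    my_decay_integrable (hv1s.continuous.mul hv1s.continuous) (prodbd v1 v1 hb1 h1)
  have hfc : Continuous (deriv f) := hf.continuous_deriv (by simp)
  have J3 : Integrable (fun x => v x * deriv f (v x) * v1 x) := by
    apply my_decay_integrable (C := (C*c)*C)
    · exact (hv.continuous.mul (hfc.comp hv.continuous)).mul hv1s.continuous
    · intro x
      rw [abs_mul, abs_mul]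
      calc |v x| * |deriv f (v x)| * |v1 x| ≤ (C * c) * (C * (1+x^2)⁻¹) := by
            apply mul_le_mul _ (h1 x) (abs_nonneg _) (by positivity)
            exact mul_le_mul (hb0 x) (hc (v x)) (abs_nonneg _) hC
        _ = ((C*c)*C) * (1+x^2)⁻¹ := by ring
  -- I1 : ∫ v * v2 = - ∫ v1^2
  have gd1 : ∀ x, HasDerivAt (fun y => v y * v1 y) (v1 x * v1 x + v x * v2 x) x :=
    fun x => (hvd x).mul (hv1d x)
  have gz1 : ∫ x, (v1 x * v1 x + v x * v2 x) = 0 := by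
    have hbd : ∀ x, |v x * v1 x| ≤ (C*C) * (1+x^2)⁻¹ := prodbd v v1 hb0 h1
    exact my_integral_deriv_eq_zero gd1 (Jsq.add J1)
      (my_decay_tendsto_top hbd) (my_decay_tendsto_bot hbd)
  have I1 : ∫ x, v x * v2 x = - ∫ x, v1 x * v1 x := by
    have := integral_add Jsq J1
    rw [gz1] at this
    linarith [this]
  -- I2 : ∫ v * v3 = 0
  have gd2 : ∀ x, HasDerivAt (fun y => v y * v2 y - (1/2) * (v1 y * v1 y)) (v x * v3 x) x := by
    intro x
    have ha : HasDerivAt (fun y => v y * v2 y) (v1 x * v2 x + v x * v3 x) x :=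
      (hvd x).mul (hv2d x)
    have hb : HasDerivAt (fun y => (1/2 : ℝ) * (v1 y * v1 y))
        ((1/2) * (v2 x * v1 x + v1 x * v2 x)) x := ((hv1d x).mul (hv1d x)).const_mul _
    have h := ha.sub hb
    have : v1 x * v2 x + v x * v3 x - (1/2) * (v2 x * v1 x + v1 x * v2 x) = v x * v3 x := by
      ring
    rwa [this] at h
  have I2 : ∫ x, v x * v3 x = 0 := by
    apply my_integral_deriv_eq_zero gd2 J2
    · apply squeeze_zero_norm (a := fun x : ℝ => (C*C + (1/2)*(C*C)) * (1+x^2)⁻¹)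
      · intro x
        have b1 := prodbd v v2 hb0 h2 x
        have b2 := prodbd v1 v1 hb1 h1 x
        have := abs_sub (v x * v2 x) ((1/2) * (v1 x * v1 x))
        rw [Real.norm_eq_abs]
        calc |v x * v2 x - 1/2 * (v1 x * v1 x)| ≤ |v x * v2 x| + |(1/2) * (v1 x * v1 x)| :=
              abs_sub _ _
          _ ≤ (C*C) * (1+x^2)⁻¹ + (1/2) * ((C*C) * (1+x^2)⁻¹) := by
              have b3 : |1/2 * (v1 x * v1 x)| = 1/2 * |v1 x * v1 x| := by
                rw [abs_mul]; norm_num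
              rw [b3]; linarith
          _ = (C*C + (1/2)*(C*C)) * (1+x^2)⁻¹ := by ring
      · have := my_inv_tendsto_top.const_mul (C*C + (1/2)*(C*C))
        simpa using this
    · apply squeeze_zero_norm (a := fun x : ℝ => (C*C + (1/2)*(C*C)) * (1+x^2)⁻¹)
      · intro x
        have b1 := prodbd v v2 hb0 h2 x
        have b2 := prodbd v1 v1 hb1 h1 x
        rw [Real.norm_eq_abs]
        calc |v x * v2 x - 1/2 * (v1 x * v1 x)| ≤ |v x * v2 x| + |(1/2) * (v1 x * v1 x)| :=
              abs_sub _ _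
          _ ≤ (C*C) * (1+x^2)⁻¹ + (1/2) * ((C*C) * (1+x^2)⁻¹) := by
              have b3 : |1/2 * (v1 x * v1 x)| = 1/2 * |v1 x * v1 x| := by
                rw [abs_mul]; norm_num
              rw [b3]; linarith
          _ = (C*C + (1/2)*(C*C)) * (1+x^2)⁻¹ := by ring
      · have := my_inv_tendsto_bot.const_mul (C*C + (1/2)*(C*C))
        simpa using this
  -- I3 : ∫ v * f'(v) * v1 = 0
  have hwc : Continuous (fun w : ℝ => w * deriv f w) := continuous_id.mul hfc
  set G : ℝ → ℝ := fun y => ∫ w in (0:ℝ)..y, w * deriv f w with hGdef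
  have hGd : ∀ y : ℝ, HasDerivAt G (y * deriv f y) y := by
    intro y
    exact intervalIntegral.integral_hasDerivAt_right
      (hwc.intervalIntegrable 0 y)
      (hwc.aestronglyMeasurable.stronglyMeasurableAtFilter)
      hwc.continuousAt
  have hGcont : Continuous G := by
    apply continuous_iff_continuousAt.mpr
    exact fun y => (hGd y).continuousAt
  have hG0 : G 0 = 0 := intervalIntegral.integral_same
  have gd3 : ∀ x, HasDerivAt (fun y => G (v y)) (v x * deriv f (v x) * v1 x) x := by
    intro x
    have h := (hGd (v x)).comp x (hvd x)
    have : v x * deriv f (v x) * v1 x = v x * deriv f (v x) * v1 x := rfl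
    exact h
  have hvt : Tendsto v atTop (𝓝 0) := my_decay_tendsto_top h0
  have hvb : Tendsto v atBot (𝓝 0) := my_decay_tendsto_bot h0
  have I3 : ∫ x, v x * deriv f (v x) * v1 x = 0 := by
    apply my_integral_deriv_eq_zero gd3 J3
    · have := (hGcont.continuousAt (x := 0)).tendsto.comp hvt
      rwa [hG0] at this
    · have := (hGcont.continuousAt (x := 0)).tendsto.comp hvb
      rwa [hG0] at this
  -- combine
  have split : (fun x : ℝ => 2 * v x * (eps * iteratedDeriv 2 v x + dlt * iteratedDeriv 3 v x
        - deriv f (v x) * deriv v x))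
      = fun x : ℝ => (2*eps) * (v x * v2 x) + ((2*dlt) * (v x * v3 x)
        + (-2) * (v x * deriv f (v x) * v1 x)) := by
    funext x
    rw [e2, e3]
    show 2 * v x * (eps * v2 x + dlt * v3 x - deriv f (v x) * v1 x) = _
    ring
  rw [split]
  have J1' : Integrable (fun x => (2*eps) * (v x * v2 x)) volume := J1.const_mul _
  have J2' : Integrable (fun x => (2*dlt) * (v x * v3 x)) volume := J2.const_mul _
  have J3' : Integrable (fun x => (-2 : ℝ) * (v x * deriv f (v x) * v1 x)) volume := J3.const_mul _
  have J23 : Integrable (fun x => (2*dlt) * (v x * v3 x)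
      + (-2 : ℝ) * (v x * deriv f (v x) * v1 x)) volume := J2'.add J3'
  rw [integral_add J1' J23, integral_add J2' J3',
    integral_const_mul, integral_const_mul, integral_const_mul, I1, I2, I3]
  have hsq : ∫ x : ℝ, (deriv v x)^2 = ∫ x, v1 x * v1 x := by
    congr 1
    funext x
    rw [← hv1def, sq]
  rw [hsq]
  ring



theorem stmt0
    (f : ℝ → ℝ) (hf : ContDiff ℝ (⊤ : ℕ∞) f)
    (c : ℝ) (hc : ∀ v : ℝ, |deriv f v| ≤ c)
    (ε δ : ℝ) (hε : 0 < ε) (hδ : 0 < δ)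
    (u : ℝ → ℝ → ℝ) (u₀ : ℝ → ℝ)
    (hu : ContDiff ℝ (⊤ : ℕ∞) (fun p : ℝ × ℝ => u p.1 p.2))
    (hu₀s : ContDiff ℝ (⊤ : ℕ∞) u₀)
    (hpde : ∀ t ≥ (0:ℝ), ∀ x : ℝ,
      deriv (fun s => u s x) t + deriv (fun y => f (u t y)) x
        = ε * iteratedDeriv 2 (u t) x + δ * iteratedDeriv 3 (u t) x)
    (hinit : u 0 = u₀)
    (hu₀L2 : MemLp u₀ 2 volume)
    (hu₀'L2 : MemLp (deriv u₀) 2 volume)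
    (hdecay : ∀ (n m : ℕ) (T : ℝ), ∃ C : ℝ, ∀ t ∈ Set.Icc (0:ℝ) T, ∀ x : ℝ,
      |x| ^ m * |iteratedDeriv n (u t) x| ≤ C)
    (t : ℝ) (ht : 0 ≤ t) :
    (∫ x : ℝ, (u t x) ^ 2) + 2 * ε * ∫ s in (0:ℝ)..t, ∫ x : ℝ, (deriv (u s) x) ^ 2
      = ∫ x : ℝ, (u₀ x) ^ 2 := by
  have hone : (1 : WithTop ℕ∞) ≤ ∞ := by norm_num
  have huU : ContDiff ℝ ∞ (fun p : ℝ × ℝ => u p.1 p.2) := hu.of_le (by simp)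
  have hus : ∀ s : ℝ, ContDiff ℝ ∞ (u s) := fun s =>
    huU.comp (contDiff_const.prodMk contDiff_id)
  have hut : ∀ x : ℝ, ContDiff ℝ ∞ (fun s => u s x) := fun x =>
    huU.comp (contDiff_id.prodMk contDiff_const)
  have hcnn : 0 ≤ c := (abs_nonneg _).trans (hc 0)
  have hinv_le_one : ∀ x : ℝ, (1 + x^2)⁻¹ ≤ 1 := by
    intro x
    rw [inv_le_one_iff₀]
    right; nlinarith [sq_nonneg x]
  have hinv_nonneg : ∀ x : ℝ, (0:ℝ) ≤ (1 + x^2)⁻¹ := fun x => by positivity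
  -- decay bounds with a single constant
  have hdec : ∀ n : ℕ, ∃ C : ℝ, 0 ≤ C ∧ ∀ s ∈ Icc (0:ℝ) t, ∀ x : ℝ,
      |iteratedDeriv n (u s) x| ≤ C * (1 + x^2)⁻¹ := by
    intro n
    obtain ⟨C0, h0⟩ := hdecay n 0 t
    obtain ⟨C2, h2⟩ := hdecay n 2 t
    refine ⟨max (C0 + C2) 0, le_max_right _ _, fun s hs x => ?_⟩
    have hpos : (0:ℝ) < 1 + x^2 := by positivity
    have a0 := h0 s hs x
    have a2 := h2 s hs x
    simp only [pow_zero, one_mul] at a0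
    rw [sq_abs] at a2
    have key : |iteratedDeriv n (u s) x| * (1 + x^2) ≤ C0 + C2 := by nlinarith
    have h2' : |iteratedDeriv n (u s) x| ≤ (C0 + C2) * (1 + x^2)⁻¹ := by
      rw [← div_eq_mul_inv, le_div_iff₀ hpos]; exact key
    exact h2'.trans (mul_le_mul_of_nonneg_right (le_max_left _ _) (hinv_nonneg x))
  obtain ⟨K0, hK0, hd0⟩ := hdec 0
  obtain ⟨K1, hK1, hd1⟩ := hdec 1
  obtain ⟨K2, hK2, hd2⟩ := hdec 2
  obtain ⟨K3, hK3, hd3⟩ := hdec 3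
  set C : ℝ := K0 + K1 + K2 + K3 with hCdef
  have hC : 0 ≤ C := by positivity
  have e2g : ∀ g : ℝ → ℝ, iteratedDeriv 2 g = deriv (deriv g) := by
    intro g; simp [iteratedDeriv_succ, iteratedDeriv_one]
  have e3g : ∀ g : ℝ → ℝ, iteratedDeriv 3 g = deriv (deriv (deriv g)) := by
    intro g; simp [iteratedDeriv_succ, iteratedDeriv_one]
  have hb0 : ∀ s ∈ Icc (0:ℝ) t, ∀ x : ℝ, |u s x| ≤ C * (1 + x^2)⁻¹ := by
    intro s hs x
    have := hd0 s hs x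
    rw [iteratedDeriv_zero] at this
    refine this.trans (mul_le_mul_of_nonneg_right ?_ (hinv_nonneg x))
    rw [hCdef]; linarith
  have hb1 : ∀ s ∈ Icc (0:ℝ) t, ∀ x : ℝ, |deriv (u s) x| ≤ C * (1 + x^2)⁻¹ := by
    intro s hs x
    have := hd1 s hs x
    rw [iteratedDeriv_one] at this
    refine this.trans (mul_le_mul_of_nonneg_right ?_ (hinv_nonneg x))
    rw [hCdef]; linarith
  have hb2 : ∀ s ∈ Icc (0:ℝ) t, ∀ x : ℝ, |deriv (deriv (u s)) x| ≤ C * (1 + x^2)⁻¹ := by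
    intro s hs x
    have := hd2 s hs x
    rw [e2g] at this
    refine this.trans (mul_le_mul_of_nonneg_right ?_ (hinv_nonneg x))
    rw [hCdef]; linarith
  have hb3 : ∀ s ∈ Icc (0:ℝ) t, ∀ x : ℝ, |deriv (deriv (deriv (u s))) x|
      ≤ C * (1 + x^2)⁻¹ := by
    intro s hs x
    have := hd3 s hs x
    rw [e3g] at this
    refine this.trans (mul_le_mul_of_nonneg_right ?_ (hinv_nonneg x))
    rw [hCdef]; linarith
  have hsup0 : ∀ s ∈ Icc (0:ℝ) t, ∀ x : ℝ, |u s x| ≤ C := by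
    intro s hs x
    refine (hb0 s hs x).trans ?_
    nlinarith [hinv_le_one x, hinv_nonneg x]
  -- PDE rearranged
  have hchain : ∀ (s x : ℝ), deriv (fun y => f (u s y)) x
      = deriv f (u s x) * deriv (u s) x := by
    intro s x
    have hd1' : HasDerivAt (u s) (deriv (u s) x) x := (((hus s).differentiable (by simp)) x).hasDerivAt
    have hd2' : HasDerivAt f (deriv f (u s x)) (u s x) :=
      ((hf.differentiable (by simp)) (u s x)).hasDerivAt
    exact (hd2'.comp x hd1').deriv
  have hut_eq : ∀ s : ℝ, 0 ≤ s → ∀ x : ℝ, deriv (fun τ => u τ x) s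
      = ε * iteratedDeriv 2 (u s) x + δ * iteratedDeriv 3 (u s) x
        - deriv f (u s x) * deriv (u s) x := by
    intro s hs x
    have h := hpde s hs x
    rw [hchain s x] at h
    linarith
  -- continuity facts
  have hfc : Continuous (deriv f) := hf.continuous_deriv (by simp)
  have hcont_n : ∀ (s : ℝ) (n : ℕ), Continuous (iteratedDeriv n (u s)) := by
    intro s n
    rw [iteratedDeriv_eq_iterate]
    exact (ContDiff.iterate_deriv n (hus s)).continuous
  have hRHScont : ∀ s : ℝ, Continuous (fun x => 2 * u s x *
      (ε * iteratedDeriv 2 (u s) x + δ * iteratedDeriv 3 (u s) x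
        - deriv f (u s x) * deriv (u s) x)) := by
    intro s
    apply (continuous_const.mul (hus s).continuous).mul
    exact ((continuous_const.mul (hcont_n s 2)).add (continuous_const.mul (hcont_n s 3))).sub
      ((hfc.comp (hus s).continuous).mul ((hus s).continuous_deriv hone))
  -- integrability of the squares
  have hIsq : ∀ s ∈ Icc (0:ℝ) t, Integrable (fun x : ℝ => (u s x)^2) := by
    intro s hs
    apply my_decay_integrable (C := C*C) ((hus s).continuous.pow 2)
    intro x
    rw [Pi.pow_apply, abs_pow, sq]
    calc |u s x| * |u s x| ≤ C * (C * (1+x^2)⁻¹) :=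
          mul_le_mul (hsup0 s hs x) (hb0 s hs x) (abs_nonneg _) hC
      _ = (C*C) * (1+x^2)⁻¹ := by ring
  -- derivative of Φ on the open interval
  have hderivφ : ∀ s₀ ∈ Ioo (0:ℝ) t,
      HasDerivAt (fun s => ∫ x : ℝ, (u s x)^2)
        (-(2*ε) * ∫ x : ℝ, (deriv (u s₀) x)^2) s₀ := by
    intro s₀ hs₀
    have hs₀Icc : s₀ ∈ Icc (0:ℝ) t := ⟨hs₀.1.le, hs₀.2.le⟩
    set r : ℝ := min s₀ (t - s₀) with hrdef
    have hrpos : 0 < r := lt_min hs₀.1 (by linarith [hs₀.2])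
    have hball : Metric.ball s₀ r ⊆ Icc (0:ℝ) t := by
      intro s hsb
      rw [Real.ball_eq_Ioo] at hsb
      have h1 := min_le_left s₀ (t - s₀)
      have h2 := min_le_right s₀ (t - s₀)
      constructor
      · have := hsb.1; rw [← hrdef] at *; linarith
      · have := hsb.2; rw [← hrdef] at *; linarith
    have key := hasDerivAt_integral_of_dominated_loc_of_deriv_le (μ := volume)
      (F := fun (s : ℝ) (x : ℝ) => (u s x)^2)
      (F' := fun (s : ℝ) (x : ℝ) => 2 * u s x * deriv (fun τ => u τ x) s)
      (x₀ := s₀) (bound := fun x : ℝ => (2*C*(ε*C + δ*C + c*C)) * (1+x^2)⁻¹)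
      (Metric.ball_mem_nhds s₀ hrpos)
      (Eventually.of_forall fun s => ((hus s).continuous.pow 2).aestronglyMeasurable)
      (hIsq s₀ hs₀Icc)
      ?_ ?_ ?_ ?_
    · obtain ⟨-, hkey⟩ := key
      have hval : (∫ x : ℝ, 2 * u s₀ x * deriv (fun τ => u τ x) s₀)
          = -(2*ε) * ∫ x : ℝ, (deriv (u s₀) x)^2 := by
        have e : (fun x : ℝ => 2 * u s₀ x * deriv (fun τ => u τ x) s₀)
            = fun x : ℝ => 2 * u s₀ x * (ε * iteratedDeriv 2 (u s₀) x
              + δ * iteratedDeriv 3 (u s₀) x - deriv f (u s₀ x) * deriv (u s₀) x) := by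
          funext x; rw [hut_eq s₀ hs₀.1.le x]
        rw [e]
        exact my_key_step f hf c ε δ hc (u s₀) (hus s₀) C
          (hb0 s₀ hs₀Icc) (hb1 s₀ hs₀Icc) (hb2 s₀ hs₀Icc) (hb3 s₀ hs₀Icc)
      rwa [hval] at hkey
    · -- measurability of F' s₀
      beta_reduce
      have e : (fun x : ℝ => 2 * u s₀ x * deriv (fun τ => u τ x) s₀)
          = fun x : ℝ => 2 * u s₀ x * (ε * iteratedDeriv 2 (u s₀) x
            + δ * iteratedDeriv 3 (u s₀) x - deriv f (u s₀ x) * deriv (u s₀) x) := by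
        funext x; rw [hut_eq s₀ hs₀.1.le x]
      rw [e]
      exact (hRHScont s₀).aestronglyMeasurable
    · -- bound
      refine ae_of_all _ fun x s hsb => ?_
      beta_reduce
      have hsIcc := hball hsb
      rw [hut_eq s hsIcc.1 x]
      have hA := hd2 s hsIcc x
      have hB := hd3 s hsIcc x
      have hE : |deriv f (u s x) * deriv (u s) x| ≤ c * (C * (1+x^2)⁻¹) := by
        rw [abs_mul]
        exact mul_le_mul (hc _) (hb1 s hsIcc x) (abs_nonneg _) hcnn
      have hdbd : |ε * iteratedDeriv 2 (u s) x + δ * iteratedDeriv 3 (u s) x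
          - deriv f (u s x) * deriv (u s) x| ≤ (ε*C + δ*C + c*C) * (1+x^2)⁻¹ := by
        have t1 : |ε * iteratedDeriv 2 (u s) x| ≤ ε * (K2 * (1+x^2)⁻¹) := by
          rw [abs_mul, abs_of_pos hε]
          exact mul_le_mul_of_nonneg_left hA hε.le
        have t2 : |δ * iteratedDeriv 3 (u s) x| ≤ δ * (K3 * (1+x^2)⁻¹) := by
          rw [abs_mul, abs_of_pos hδ]
          exact mul_le_mul_of_nonneg_left hB hδ.le
        have tri : |ε * iteratedDeriv 2 (u s) x + δ * iteratedDeriv 3 (u s) x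
            - deriv f (u s x) * deriv (u s) x|
            ≤ |ε * iteratedDeriv 2 (u s) x| + |δ * iteratedDeriv 3 (u s) x|
              + |deriv f (u s x) * deriv (u s) x| := by
          calc _ ≤ |ε * iteratedDeriv 2 (u s) x + δ * iteratedDeriv 3 (u s) x|
                + |deriv f (u s x) * deriv (u s) x| := abs_sub _ _
            _ ≤ _ := by
                have h9 := abs_add_le (ε * iteratedDeriv 2 (u s) x) (δ * iteratedDeriv 3 (u s) x)
                linarith
        have hK2C : K2 ≤ C := by rw [hCdef]; linarith
        have hK3C : K3 ≤ C := by rw [hCdef]; linarith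
        have hx := hinv_nonneg x
        nlinarith [mul_le_mul_of_nonneg_left (mul_le_mul_of_nonneg_right hK2C hx) hε.le,
          mul_le_mul_of_nonneg_left (mul_le_mul_of_nonneg_right hK3C hx) hδ.le]
      rw [Real.norm_eq_abs, abs_mul, abs_mul]
      have h2abs : |(2:ℝ)| = 2 := by norm_num
      rw [h2abs]
      calc 2 * |u s x| * |ε * iteratedDeriv 2 (u s) x + δ * iteratedDeriv 3 (u s) x
            - deriv f (u s x) * deriv (u s) x|
          ≤ 2 * C * ((ε*C + δ*C + c*C) * (1+x^2)⁻¹) := by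
            have hmul := mul_le_mul (hsup0 s hsIcc x) hdbd (abs_nonneg _) hC
            nlinarith [abs_nonneg (u s x), hdbd, hsup0 s hsIcc x]
        _ = (2*C*(ε*C + δ*C + c*C)) * (1+x^2)⁻¹ := by ring
    · exact (integrable_inv_one_add_sq.const_mul _)
    · -- differentiability in s
      refine ae_of_all _ fun x s hsb => ?_
      beta_reduce
      have h := (((hut x).differentiable (by simp)) s).hasDerivAt
      have h2 := h.pow 2
      have : (2:ℕ) * (u s x)^(2-1) * deriv (fun τ => u τ x) s
          = 2 * u s x * deriv (fun τ => u τ x) s := by push_cast; ring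
      rwa [this] at h2
  -- continuity of Φ on [0, t]
  have hφcont : ContinuousOn (fun s => ∫ x : ℝ, (u s x)^2) (Icc (0:ℝ) t) := by
    apply continuousOn_of_dominated (bound := fun x : ℝ => (C*C) * (1+x^2)⁻¹)
    · exact fun s _ => ((hus s).continuous.pow 2).aestronglyMeasurable
    · intro s hs
      refine ae_of_all _ fun x => ?_
      rw [Real.norm_eq_abs, abs_pow, sq]
      calc |u s x| * |u s x| ≤ C * (C * (1+x^2)⁻¹) :=
            mul_le_mul (hsup0 s hs x) (hb0 s hs x) (abs_nonneg _) hC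
        _ = (C*C) * (1+x^2)⁻¹ := by ring
    · exact (integrable_inv_one_add_sq.const_mul _)
    · exact ae_of_all _ fun x => (((hut x).continuous).pow 2).continuousOn
  -- continuity of Ψ on [0, t]
  have hfderiv_cont : Continuous (fun p : ℝ × ℝ =>
      (fderiv ℝ (fun q : ℝ × ℝ => u q.1 q.2) p) (0, 1)) :=
    (huU.continuous_fderiv (by simp)).clm_apply continuous_const
  have hderiv_eq : ∀ s x : ℝ, deriv (u s) x
      = (fderiv ℝ (fun q : ℝ × ℝ => u q.1 q.2) (s, x)) (0, 1) := by
    intro s x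
    have hU : HasFDerivAt (fun q : ℝ × ℝ => u q.1 q.2)
        (fderiv ℝ (fun q : ℝ × ℝ => u q.1 q.2) (s, x)) (s, x) :=
      ((huU.differentiable (by simp)) (s, x)).hasFDerivAt
    have hγ : HasDerivAt (fun y : ℝ => ((s, y) : ℝ × ℝ)) ((0:ℝ), (1:ℝ)) x :=
      (hasDerivAt_const x s).prodMk (hasDerivAt_id x)
    exact (hU.comp_hasDerivAt x hγ).deriv
  have hψcont : ContinuousOn (fun s => ∫ x : ℝ, (deriv (u s) x)^2) (Icc (0:ℝ) t) := by
    apply continuousOn_of_dominated (bound := fun x : ℝ => (C*C) * (1+x^2)⁻¹)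
    · exact fun s _ => (((hus s).continuous_deriv hone).pow 2).aestronglyMeasurable
    · intro s hs
      refine ae_of_all _ fun x => ?_
      rw [Real.norm_eq_abs, abs_pow, sq]
      have hsup1 : |deriv (u s) x| ≤ C := by
        refine (hb1 s hs x).trans ?_
        nlinarith [hinv_le_one x, hinv_nonneg x]
      calc |deriv (u s) x| * |deriv (u s) x| ≤ C * (C * (1+x^2)⁻¹) :=
            mul_le_mul hsup1 (hb1 s hs x) (abs_nonneg _) hC
        _ = (C*C) * (1+x^2)⁻¹ := by ring
    · exact (integrable_inv_one_add_sq.const_mul _)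
    · refine ae_of_all _ fun x => ?_
      have e : (fun s : ℝ => (deriv (u s) x)^2)
          = fun s : ℝ => ((fderiv ℝ (fun q : ℝ × ℝ => u q.1 q.2) (s, x)) (0, 1))^2 := by
        funext s; rw [hderiv_eq s x]
      rw [e]
      exact ((hfderiv_cont.comp (continuous_id.prodMk continuous_const)).pow 2).continuousOn
  -- FTC
  have hg'cont : ContinuousOn (fun s => -(2*ε) * ∫ x : ℝ, (deriv (u s) x)^2)
      (Icc (0:ℝ) t) := continuousOn_const.mul hψcont
  have hg'int : IntervalIntegrable (fun s => -(2*ε) * ∫ x : ℝ, (deriv (u s) x)^2)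
      volume 0 t := by
    apply ContinuousOn.intervalIntegrable
    rwa [uIcc_of_le ht]
  have hFTC : ∫ s in (0:ℝ)..t, (-(2*ε) * ∫ x : ℝ, (deriv (u s) x)^2)
      = (∫ x : ℝ, (u t x)^2) - ∫ x : ℝ, (u 0 x)^2 :=
    intervalIntegral.integral_eq_sub_of_hasDeriv_right_of_le ht hφcont
      (fun s hs => (hderivφ s hs).hasDerivWithinAt) hg'int
  have hmul : ∫ s in (0:ℝ)..t, (-(2*ε) * ∫ x : ℝ, (deriv (u s) x)^2)
      = -(2*ε) * ∫ s in (0:ℝ)..t, ∫ x : ℝ, (deriv (u s) x)^2 :=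
    intervalIntegral.integral_const_mul _ _
  have hi : (∫ x : ℝ, (u 0 x)^2) = ∫ x : ℝ, (u₀ x)^2 := by rw [hinit]
  rw [hmul, hi] at hFTC
  linarith
end

section
/- For every t ≥ 0 one has ‖u(·,t)‖_{L²(ℝ)} ≤ ‖u₀‖_{L²(ℝ)} (estimate (2.5a) of Theorem 2.1). -/
open MeasureTheory Filter Set Topology

/-- FTC on the whole line: integral of the derivative vanishes when the function
tends to 0 at both ends. -/
lemma ftc_line {g g' : ℝ → ℝ} (hg : ∀ x, HasDerivAt g (g' x) x)
    (hint : Integrable g') (hbot : Tendsto g atBot (𝓝 0))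
    (htop : Tendsto g atTop (𝓝 0)) : ∫ x, g' x = 0 := by
  have h1 : ∫ x in Iic (0:ℝ), g' x = g 0 - 0 :=
    integral_Iic_of_hasDerivAt_of_tendsto' (fun x _ => hg x) hint.integrableOn hbot
  have h2 : ∫ x in Ioi (0:ℝ), g' x = 0 - g 0 :=
    integral_Ioi_of_hasDerivAt_of_tendsto' (fun x _ => hg x) hint.integrableOn htop
  rw [← intervalIntegral.integral_Iic_add_Ioi (b := (0:ℝ)) hint.integrableOn hint.integrableOn, h1, h2]
  ring

lemma integrable_of_decay {g : ℝ → ℝ} (hg : Continuous g) {K : ℝ}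
    (hb : ∀ x, |g x| ≤ K * (1 + x ^ 2)⁻¹) : Integrable g := by
  refine (integrable_inv_one_add_sq.const_mul K).mono' hg.aestronglyMeasurable ?_
  refine ae_of_all _ fun x => ?_
  simpa [Real.norm_eq_abs] using hb x

lemma tendsto_atTop_one_add_sq : Tendsto (fun x : ℝ => 1 + x ^ 2) atTop atTop := by
  apply tendsto_atTop_add_const_left
  exact (tendsto_pow_atTop two_ne_zero)

lemma tendsto_atBot_one_add_sq : Tendsto (fun x : ℝ => 1 + x ^ 2) atBot atTop := by
  apply tendsto_atTop_add_const_left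
  have : Tendsto (fun x : ℝ => |x| ^ 2) atBot atTop :=
    (tendsto_pow_atTop two_ne_zero).comp tendsto_abs_atBot_atTop
  simpa [sq_abs] using this

lemma tendsto_zero_of_decay {g : ℝ → ℝ} {K : ℝ}
    (hb : ∀ x, |g x| ≤ K * (1 + x ^ 2)⁻¹) :
    Tendsto g atBot (𝓝 0) ∧ Tendsto g atTop (𝓝 0) := by
  have hbot : Tendsto (fun x : ℝ => K * (1 + x ^ 2)⁻¹) atBot (𝓝 0) := by
    simpa using (tendsto_atBot_one_add_sq.inv_tendsto_atTop).const_mul K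
  have htop : Tendsto (fun x : ℝ => K * (1 + x ^ 2)⁻¹) atTop (𝓝 0) := by
    simpa using (tendsto_atTop_one_add_sq.inv_tendsto_atTop).const_mul K
  constructor
  · exact squeeze_zero_norm (fun x => by simpa [Real.norm_eq_abs] using hb x) hbot
  · exact squeeze_zero_norm (fun x => by simpa [Real.norm_eq_abs] using hb x) htop

lemma decay_mul {a b K L x : ℝ} (hK : 0 ≤ K) (ha : |a| ≤ K * (1 + x ^ 2)⁻¹)
    (hb : |b| ≤ L * (1 + x ^ 2)⁻¹) : |a * b| ≤ K * L * (1 + x ^ 2)⁻¹ := by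
  have h2 : (0:ℝ) < 1 + x ^ 2 := by positivity
  have hinv : (0:ℝ) < (1 + x ^ 2)⁻¹ := by positivity
  have hinv1 : (1 + x ^ 2)⁻¹ ≤ 1 := by
    rw [inv_le_one_iff₀]; right; nlinarith
  have hL : 0 ≤ L := by
    by_contra h
    push_neg at h
    nlinarith [abs_nonneg b]
  calc |a * b| = |a| * |b| := abs_mul a b
    _ ≤ (K * (1 + x ^ 2)⁻¹) * (L * (1 + x ^ 2)⁻¹) :=
        mul_le_mul ha hb (abs_nonneg b) (by positivity)
    _ = (K * L * (1 + x ^ 2)⁻¹) * (1 + x ^ 2)⁻¹ := by ring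
    _ ≤ (K * L * (1 + x ^ 2)⁻¹) * 1 := by
        apply mul_le_mul_of_nonneg_left hinv1 (by positivity)
    _ = K * L * (1 + x ^ 2)⁻¹ := by ring

theorem stmt1
    (f : ℝ → ℝ) (hf : ContDiff ℝ (⊤ : ℕ∞) f)
    (c : ℝ) (hc : ∀ v : ℝ, |deriv f v| ≤ c)
    (ε δ : ℝ) (hε : 0 < ε) (hδ : 0 < δ)
    (u : ℝ → ℝ → ℝ) (u₀ : ℝ → ℝ)
    (hu : ContDiff ℝ (⊤ : ℕ∞) (fun p : ℝ × ℝ => u p.1 p.2))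
    (hu₀s : ContDiff ℝ (⊤ : ℕ∞) u₀)
    (hpde : ∀ t ≥ (0:ℝ), ∀ x : ℝ,
      deriv (fun s => u s x) t + deriv (fun y => f (u t y)) x
        = ε * iteratedDeriv 2 (u t) x + δ * iteratedDeriv 3 (u t) x)
    (hinit : u 0 = u₀)
    (hu₀L2 : MemLp u₀ 2 volume)
    (hu₀'L2 : MemLp (deriv u₀) 2 volume)
    (hdecay : ∀ (n m : ℕ) (T : ℝ), ∃ C : ℝ, ∀ t ∈ Set.Icc (0:ℝ) T, ∀ x : ℝ,
      |x| ^ m * |iteratedDeriv n (u t) x| ≤ C)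
    (t : ℝ) (ht : 0 ≤ t) :
    eLpNorm (u t) 2 volume ≤ eLpNorm u₀ 2 volume := by
  -- basic smoothness facts
  have hUdiff : Differentiable ℝ (fun p : ℝ × ℝ => u p.1 p.2) := hu.differentiable (by simp)
  have hus : ∀ s, ContDiff ℝ (⊤ : ℕ∞) (u s) := fun s =>
    hu.comp ((contDiff_const (c := s)).prodMk contDiff_id)
  -- spatial derivatives
  have hDd : ∀ (n : ℕ) (s : ℝ) (x : ℝ),
      HasDerivAt (iteratedDeriv n (u s)) (iteratedDeriv (n+1) (u s) x) x := by
    intro n s x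
    rw [iteratedDeriv_succ]
    exact (((hus s).differentiable_iteratedDeriv n (by exact_mod_cast ENat.coe_lt_top n)) x).hasDerivAt
  have hD0 : ∀ (s x : ℝ), HasDerivAt (u s) (iteratedDeriv 1 (u s) x) x := by
    intro s x
    have := hDd 0 s x
    rwa [iteratedDeriv_zero] at this
  -- time derivative
  set ut : ℝ → ℝ → ℝ := fun s x => deriv (fun r => u r x) s with hut_def
  have hut : ∀ s x, HasDerivAt (fun r => u r x) (ut s x) s := by
    intro s x
    have : DifferentiableAt ℝ (fun r => u r x) s :=
      (hUdiff.comp (differentiable_id.prodMk (differentiable_const x))) s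
    exact this.hasDerivAt
  have hutf : ∀ s x, ut s x = fderiv ℝ (fun p : ℝ × ℝ => u p.1 p.2) (s, x) (1, 0) := by
    intro s x
    have h1 : HasDerivAt (fun r : ℝ => (r, x)) ((1:ℝ), (0:ℝ)) s :=
      (hasDerivAt_id s).prodMk (hasDerivAt_const s x)
    have h2 := (((hUdiff (s, x)).hasFDerivAt.comp_hasDerivAt s h1)).deriv
    rw [show ((fun p : ℝ × ℝ => u p.1 p.2) ∘ fun r => (r, x)) = fun r => u r x from rfl] at h2
    simp only [hut_def]
    exact h2
  have hutcont : ∀ s, Continuous (fun x => ut s x) := by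
    intro s
    have h1 : Continuous (fun x : ℝ => fderiv ℝ (fun p : ℝ × ℝ => u p.1 p.2) (s, x)) :=
      (hu.continuous_fderiv (by simp)).comp (continuous_const.prodMk continuous_id)
    have : Continuous (fun x : ℝ => fderiv ℝ (fun p : ℝ × ℝ => u p.1 p.2) (s, x) (1, 0)) :=
      h1.clm_apply continuous_const
    exact this.congr fun x => (hutf s x).symm
  -- chain rule for the flux term
  have hchain : ∀ (s x : ℝ), deriv (fun y => f (u s y)) x
      = deriv f (u s x) * iteratedDeriv 1 (u s) x := by
    intro s x
    have h1 : DifferentiableAt ℝ f (u s x) := (hf.differentiable (by simp)) _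
    have h2 : DifferentiableAt ℝ (u s) x := ((hus s).differentiable (by simp)) x
    rw [show (fun y => f (u s y)) = f ∘ (u s) by rfl, deriv_comp x h1 h2, iteratedDeriv_one]
  -- PDE rearranged
  have hpde' : ∀ s ∈ Icc (0:ℝ) t, ∀ x, ut s x
      = -(deriv f (u s x) * iteratedDeriv 1 (u s) x)
        + ε * iteratedDeriv 2 (u s) x + δ * iteratedDeriv 3 (u s) x := by
    intro s hs x
    have := hpde s hs.1 x
    rw [hchain s x] at this
    simp only [hut_def]
    linarith
  -- uniform decay bounds
  have hc0 : 0 ≤ c := le_trans (abs_nonneg _) (hc 0)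
  have hK : ∀ n : ℕ, ∃ K : ℝ, 0 ≤ K ∧ ∀ s ∈ Icc (0:ℝ) t, ∀ x,
      |iteratedDeriv n (u s) x| ≤ K * (1 + x ^ 2)⁻¹ := by
    intro n
    obtain ⟨C₀, hC₀⟩ := hdecay n 0 t
    obtain ⟨C₂, hC₂⟩ := hdecay n 2 t
    have h0mem : (0:ℝ) ∈ Icc (0:ℝ) t := ⟨le_refl 0, ht⟩
    have hC₀0 : 0 ≤ C₀ := le_trans (by positivity) (hC₀ 0 h0mem 0)
    have hC₂0 : 0 ≤ C₂ := le_trans (by positivity) (hC₂ 0 h0mem 0)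
    refine ⟨C₀ + C₂, by linarith, fun s hs x => ?_⟩
    have h2 : (0:ℝ) < 1 + x ^ 2 := by positivity
    have e0 := hC₀ s hs x
    have e2 := hC₂ s hs x
    simp only [pow_zero, one_mul] at e0
    have hax : |x| ^ 2 = x ^ 2 := sq_abs x
    rw [hax] at e2
    rw [← div_eq_mul_inv, le_div_iff₀ h2]
    nlinarith [abs_nonneg (iteratedDeriv n (u s) x)]
  obtain ⟨K₀, hK₀0, hK₀⟩ := hK 0
  obtain ⟨K₁, hK₁0, hK₁⟩ := hK 1
  obtain ⟨K₂, hK₂0, hK₂⟩ := hK 2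
  obtain ⟨K₃, hK₃0, hK₃⟩ := hK 3
  have hK₀' : ∀ s ∈ Icc (0:ℝ) t, ∀ x, |u s x| ≤ K₀ * (1 + x ^ 2)⁻¹ := by
    intro s hs x
    have := hK₀ s hs x
    rwa [iteratedDeriv_zero] at this
  -- bound on the time derivative
  set M : ℝ := c * K₁ + ε * K₂ + δ * K₃ with hM_def
  have hM0 : 0 ≤ M := by positivity
  have hutb : ∀ s ∈ Icc (0:ℝ) t, ∀ x, |ut s x| ≤ M * (1 + x ^ 2)⁻¹ := by
    intro s hs x
    rw [hpde' s hs x]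
    have h1 : |deriv f (u s x) * iteratedDeriv 1 (u s) x| ≤ c * (K₁ * (1 + x ^ 2)⁻¹) := by
      rw [abs_mul]
      exact mul_le_mul (hc _) (hK₁ s hs x) (abs_nonneg _) hc0
    have h2 := hK₂ s hs x
    have h3 := hK₃ s hs x
    have := abs_mul ε (iteratedDeriv 2 (u s) x)
    calc |(-(deriv f (u s x) * iteratedDeriv 1 (u s) x)
        + ε * iteratedDeriv 2 (u s) x + δ * iteratedDeriv 3 (u s) x)|
        ≤ |deriv f (u s x) * iteratedDeriv 1 (u s) x| + |ε * iteratedDeriv 2 (u s) x|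
          + |δ * iteratedDeriv 3 (u s) x| := by
          refine le_trans (abs_add_le _ _) ?_
          gcongr
          refine le_trans (abs_add_le _ _) ?_
          simp [abs_neg]
      _ ≤ c * (K₁ * (1 + x ^ 2)⁻¹) + ε * (K₂ * (1 + x ^ 2)⁻¹) + δ * (K₃ * (1 + x ^ 2)⁻¹) := by
          gcongr
          · rw [abs_mul, abs_of_pos hε]; gcongr
          · rw [abs_mul, abs_of_pos hδ]; gcongr
      _ = M * (1 + x ^ 2)⁻¹ := by rw [hM_def]; ring
  -- continuity in x of all integrands
  have hcont_u : ∀ s, Continuous (u s) := fun s => (hus s).continuous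
  have hcont_D : ∀ (n : ℕ) (s : ℝ), Continuous (iteratedDeriv n (u s)) := fun n s =>
    (hus s).continuous_iteratedDeriv n (by exact_mod_cast le_top)
  have hcont_f' : Continuous (deriv f) := hf.continuous_deriv (by simp)
  -- energy functional
  set E : ℝ → ℝ := fun s => ∫ x, (u s x) ^ 2 with hE_def
  have hint_sq : ∀ s ∈ Icc (0:ℝ) t, Integrable (fun x => (u s x) ^ 2) := by
    intro s hs
    apply integrable_of_decay ((hcont_u s).pow 2) (K := K₀ * K₀)
    intro x
    have := decay_mul hK₀0 (hK₀' s hs x) (hK₀' s hs x)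
    simpa [pow_two] using this
  -- integration by parts identities for s ∈ Icc 0 t
  have key_int : ∀ s ∈ Icc (0:ℝ) t, ∫ x, 2 * u s x * ut s x
      = -(2*ε) * ∫ x, iteratedDeriv 1 (u s) x * iteratedDeriv 1 (u s) x := by
    intro s hs
    set d1 := iteratedDeriv 1 (u s) with hd1
    set d2 := iteratedDeriv 2 (u s) with hd2
    set d3 := iteratedDeriv 3 (u s) with hd3
    -- integrability facts
    have hbd1f : ∀ x, |deriv f (u s x) * d1 x| ≤ (c * K₁) * (1 + x ^ 2)⁻¹ := by
      intro x
      rw [abs_mul, mul_assoc]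
      exact mul_le_mul (hc _) (hK₁ s hs x) (abs_nonneg _) hc0
    have i_ud1f : Integrable (fun x => u s x * (deriv f (u s x) * d1 x)) := by
      apply integrable_of_decay ((hcont_u s).mul ((hcont_f'.comp (hcont_u s)).mul
        (hcont_D 1 s))) (K := K₀ * (c * K₁))
      intro x
      exact decay_mul hK₀0 (hK₀' s hs x) (hbd1f x)
    have i_d1d1 : Integrable (fun x => d1 x * d1 x) := by
      apply integrable_of_decay ((hcont_D 1 s).mul (hcont_D 1 s)) (K := K₁ * K₁)
      intro x
      exact decay_mul hK₁0 (hK₁ s hs x) (hK₁ s hs x)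
    have i_ud2 : Integrable (fun x => u s x * d2 x) := by
      apply integrable_of_decay ((hcont_u s).mul (hcont_D 2 s)) (K := K₀ * K₂)
      intro x
      exact decay_mul hK₀0 (hK₀' s hs x) (hK₂ s hs x)
    have i_d1d2 : Integrable (fun x => d1 x * d2 x) := by
      apply integrable_of_decay ((hcont_D 1 s).mul (hcont_D 2 s)) (K := K₁ * K₂)
      intro x
      exact decay_mul hK₁0 (hK₁ s hs x) (hK₂ s hs x)
    have i_d2d1 : Integrable (fun x => d2 x * d1 x) := by
      apply integrable_of_decay ((hcont_D 2 s).mul (hcont_D 1 s)) (K := K₂ * K₁)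
      intro x
      exact decay_mul hK₂0 (hK₂ s hs x) (hK₁ s hs x)
    have i_ud3 : Integrable (fun x => u s x * d3 x) := by
      apply integrable_of_decay ((hcont_u s).mul (hcont_D 3 s)) (K := K₀ * K₃)
      intro x
      exact decay_mul hK₀0 (hK₀' s hs x) (hK₃ s hs x)
    -- limits at infinity of products
    have tend_ud1 := tendsto_zero_of_decay (g := fun x => u s x * d1 x)
      (fun x => decay_mul hK₀0 (hK₀' s hs x) (hK₁ s hs x))
    have tend_d1d1 := tendsto_zero_of_decay (g := fun x => d1 x * d1 x)
      (fun x => decay_mul hK₁0 (hK₁ s hs x) (hK₁ s hs x))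
    have tend_ud2 := tendsto_zero_of_decay (g := fun x => u s x * d2 x)
      (fun x => decay_mul hK₀0 (hK₀' s hs x) (hK₂ s hs x))
    have tend_u := tendsto_zero_of_decay (g := fun x => u s x) (fun x => hK₀' s hs x)
    -- J1 : flux term integrates to zero
    have J1 : ∫ x, u s x * (deriv f (u s x) * d1 x) = 0 := by
      set G : ℝ → ℝ := fun v => v * f v - ∫ y in (0:ℝ)..v, f y with hG_def
      have hGd : ∀ v, HasDerivAt G (v * deriv f v) v := by
        intro v
        have h1 : HasDerivAt (fun w => w * f w) (1 * f v + v * deriv f v) v :=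
          (hasDerivAt_id v).mul ((hf.differentiable (by simp) v).hasDerivAt)
        have h2 : HasDerivAt (fun w => ∫ y in (0:ℝ)..w, f y) (f v) v :=
          (hf.continuous.integral_hasStrictDerivAt 0 v).hasDerivAt
        have h3 := h1.sub h2
        exact h3.congr_deriv (by ring)
      have hgd : ∀ x, HasDerivAt (fun y => G (u s y)) (u s x * (deriv f (u s x) * d1 x)) x := by
        intro x
        have h := (hGd (u s x)).comp x (hD0 s x)
        exact h.congr_deriv (by rw [hd1]; ring)
      have hG0 : G 0 = 0 := by simp [hG_def]
      have hGcont : Tendsto G (𝓝 0) (𝓝 0) := by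
        have := (hGd 0).continuousAt.tendsto
        rwa [hG0] at this
      have htb : Tendsto (fun y => G (u s y)) atBot (𝓝 0) := hGcont.comp tend_u.1
      have htt : Tendsto (fun y => G (u s y)) atTop (𝓝 0) := hGcont.comp tend_u.2
      exact ftc_line hgd i_ud1f htb htt
    -- J2 : ∫ u d2 = - ∫ d1 d1
    have J2 : ∫ x, u s x * d2 x = - ∫ x, d1 x * d1 x := by
      have hgd : ∀ x, HasDerivAt (fun y => u s y * d1 y) (d1 x * d1 x + u s x * d2 x) x := by
        intro x
        have h := (hD0 s x).mul (hDd 1 s x)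
        rw [← hd1, ← hd2] at h
        exact h
      have h0 := ftc_line hgd (i_d1d1.add i_ud2) tend_ud1.1 tend_ud1.2
      rw [integral_add i_d1d1 i_ud2] at h0
      linarith
    -- J3 : ∫ d1 d2 = 0
    have J3 : ∫ x, d1 x * d2 x = 0 := by
      have hgd : ∀ x, HasDerivAt (fun y => d1 y * d1 y) (d2 x * d1 x + d1 x * d2 x) x := by
        intro x
        have h := (hDd 1 s x).mul (hDd 1 s x)
        rw [← hd1, ← hd2] at h
        exact h
      have h0 := ftc_line hgd (i_d2d1.add i_d1d2) tend_d1d1.1 tend_d1d1.2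
      rw [integral_add i_d2d1 i_d1d2] at h0
      have hcomm : ∫ x, d2 x * d1 x = ∫ x, d1 x * d2 x := by
        apply integral_congr_ae
        exact ae_of_all _ fun x => mul_comm _ _
      rw [hcomm] at h0
      linarith
    -- J4 : ∫ u d3 = 0
    have J4 : ∫ x, u s x * d3 x = 0 := by
      have hgd : ∀ x, HasDerivAt (fun y => u s y * d2 y) (d1 x * d2 x + u s x * d3 x) x := by
        intro x
        have h := (hD0 s x).mul (hDd 2 s x)
        rw [← hd1, ← hd3] at h
        exact h
      have h0 := ftc_line hgd (i_d1d2.add i_ud3) tend_ud2.1 tend_ud2.2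
      rw [integral_add i_d1d2 i_ud3] at h0
      linarith
    -- assemble
    have hrw : (fun x => 2 * u s x * ut s x)
        = fun x => (-2) * (u s x * (deriv f (u s x) * d1 x))
          + (2*ε) * (u s x * d2 x) + (2*δ) * (u s x * d3 x) := by
      funext x
      rw [hpde' s hs x, ← hd1, ← hd2, ← hd3]
      ring
    have iA : Integrable (fun x => (-2) * (u s x * (deriv f (u s x) * d1 x))
        + (2*ε) * (u s x * d2 x)) volume := (i_ud1f.const_mul _).add (i_ud2.const_mul _)
    rw [hrw, integral_add iA (i_ud3.const_mul _),
      integral_add (i_ud1f.const_mul _) (i_ud2.const_mul _),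
      integral_const_mul, integral_const_mul, integral_const_mul, J1, J2, J4]
    ring
  -- continuity of E on [0, t]
  have hEcont : ContinuousOn E (Icc 0 t) := by
    intro s₀ hs₀
    rw [hE_def]
    apply continuousWithinAt_of_dominated (bound := fun x => K₀ * K₀ * (1 + x ^ 2)⁻¹)
    · exact Filter.Eventually.of_forall fun s => ((hcont_u s).pow 2).aestronglyMeasurable
    · filter_upwards [self_mem_nhdsWithin] with s hs
      refine ae_of_all _ fun x => ?_
      have := decay_mul hK₀0 (hK₀' s hs x) (hK₀' s hs x)
      simpa [Real.norm_eq_abs, pow_two] using this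
    · exact integrable_inv_one_add_sq.const_mul _
    · refine ae_of_all _ fun x => ?_
      have h1 : Continuous (fun s => u s x) :=
        hu.continuous.comp (continuous_id.prodMk continuous_const)
      exact (h1.pow 2).continuousWithinAt
  -- differentiability of E on the interior
  have hEderiv : ∀ s ∈ Ioo (0:ℝ) t, HasDerivAt E (∫ x, 2 * u s x * ut s x) s := by
    intro s hsm
    obtain ⟨hs0, hst⟩ := hsm
    set r : ℝ := min s (t - s) with hr_def
    have hr : 0 < r := lt_min hs0 (by linarith)
    have hball : Metric.ball s r ⊆ Icc 0 t := by
      intro s' hs'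
      rw [Metric.mem_ball, Real.dist_eq, abs_sub_lt_iff] at hs'
      have h1 : r ≤ s := min_le_left _ _
      have h2 : r ≤ t - s := min_le_right _ _
      constructor <;> [linarith [hs'.2]; linarith [hs'.1]]
    have main := hasDerivAt_integral_of_dominated_loc_of_deriv_le
      (F := fun s x => (u s x) ^ 2) (F' := fun s x => 2 * u s x * ut s x) (x₀ := s)
      (bound := fun x => 2 * (K₀ * M * (1 + x ^ 2)⁻¹)) (Metric.ball_mem_nhds s hr)
      (Filter.Eventually.of_forall fun s' => ((hcont_u s').pow 2).aestronglyMeasurable)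
      (hint_sq s (hball (Metric.mem_ball_self hr)))
      (((continuous_const.mul (hcont_u s)).mul (hutcont s)).aestronglyMeasurable)
      ?_ ?_ ?_
    · exact main.2
    · refine ae_of_all _ fun x s' hs' => ?_
      have hmem := hball hs'
      have h1 : |u s' x * ut s' x| ≤ K₀ * M * (1 + x ^ 2)⁻¹ :=
        decay_mul hK₀0 (hK₀' s' hmem x) (hutb s' hmem x)
      show ‖2 * u s' x * ut s' x‖ ≤ 2 * (K₀ * M * (1 + x ^ 2)⁻¹)
      rw [Real.norm_eq_abs, show (2:ℝ) * u s' x * ut s' x = 2 * (u s' x * ut s' x) by ring,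
        abs_mul, abs_two]
      linarith
    · exact (integrable_inv_one_add_sq.const_mul _).const_mul 2
    · refine ae_of_all _ fun x s' _ => ?_
      have h := (hut s' x).pow 2
      exact h.congr_deriv (by push_cast; ring)
  -- E is antitone on [0, t]
  have hEdiff : DifferentiableOn ℝ E (interior (Icc 0 t)) := by
    rw [interior_Icc]
    exact fun s hsm => ((hEderiv s hsm).differentiableAt).differentiableWithinAt
  have hnonpos : ∀ s ∈ interior (Icc (0:ℝ) t), deriv E s ≤ 0 := by
    rw [interior_Icc]
    intro s hsm
    rw [(hEderiv s hsm).deriv, key_int s (Ioo_subset_Icc_self hsm)]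
    have hnn : 0 ≤ ∫ x, iteratedDeriv 1 (u s) x * iteratedDeriv 1 (u s) x :=
      integral_nonneg fun x => mul_self_nonneg _
    have : (0:ℝ) < 2 * ε := by linarith
    nlinarith
  have hanti : AntitoneOn E (Icc 0 t) :=
    antitoneOn_of_deriv_nonpos (convex_Icc 0 t) hEcont hEdiff hnonpos
  have hle : E t ≤ E 0 := hanti ⟨le_refl 0, ht⟩ ⟨ht, le_refl t⟩ ht
  -- convert to eLpNorm
  have hMem_t : MemLp (u t) 2 volume :=
    (memLp_two_iff_integrable_sq (hcont_u t).aestronglyMeasurable).2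
      (hint_sq t ⟨ht, le_refl t⟩)
  have hnorm : ∀ (g : ℝ → ℝ), (fun x => ‖g x‖ ^ (2:ENNReal).toReal) = fun x => (g x) ^ 2 := by
    intro g
    funext x
    rw [ENNReal.toReal_ofNat, Real.norm_eq_abs, show (2:ℝ) = ((2:ℕ):ℝ) by norm_num,
      Real.rpow_natCast, sq_abs]
  rw [hMem_t.eLpNorm_eq_integral_rpow_norm two_ne_zero ENNReal.ofNat_ne_top,
    hu₀L2.eLpNorm_eq_integral_rpow_norm two_ne_zero ENNReal.ofNat_ne_top]
  apply ENNReal.ofReal_le_ofReal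
  apply Real.rpow_le_rpow
  · apply integral_nonneg
    intro x
    positivity
  · rw [hnorm (u t), hnorm u₀]
    have hE0 : E 0 = ∫ x, (u₀ x) ^ 2 := by
      simp only [hE_def]
      rw [hinit]
    rw [← hE0]
    exact hle
  · positivity
end

section
/- Let U : ℝ → ℝ be smooth with bounded derivative U', and let θ : ℝ × [0,∞) → ℝ be smooth with compact support contained in ℝ × [0,T]. Then |∫₀^∞ ∫_ℝ ε U'(u) (∂_x u) (∂_x θ) dx dt| ≤ ‖U'‖_∞ · (sup_{t∈[0,T]} ‖∂_x θ(·,t)‖_{L²(ℝ)}) · √(εT/2) · ‖u₀‖_{L²(ℝ)}; in particular this quantity is O(√ε) (estimate (2.12i) of the paper). -/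
open MeasureTheory Filter Set

set_option maxHeartbeats 1000000

noncomputable def pdx (g : ℝ × ℝ → ℝ) : ℝ × ℝ → ℝ := fun p => fderiv ℝ g p (0,1)
noncomputable def pdt (g : ℝ × ℝ → ℝ) : ℝ × ℝ → ℝ := fun p => fderiv ℝ g p (1,0)

lemma pdx_contDiff {g : ℝ × ℝ → ℝ} (hg : ContDiff ℝ (⊤ : ℕ∞) g) : ContDiff ℝ (⊤ : ℕ∞) (pdx g) :=
  (hg.fderiv_right (by simp)).clm_apply contDiff_const

lemma pdt_contDiff {g : ℝ × ℝ → ℝ} (hg : ContDiff ℝ (⊤ : ℕ∞) g) : ContDiff ℝ (⊤ : ℕ∞) (pdt g) :=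
  (hg.fderiv_right (by simp)).clm_apply contDiff_const

lemma hasDerivAt_pdx {g : ℝ × ℝ → ℝ} (hg : ContDiff ℝ (⊤ : ℕ∞) g) (t x : ℝ) :
    HasDerivAt (fun y => g (t, y)) (pdx g (t, x)) x := by
  have h1 : HasDerivAt (fun y : ℝ => ((t, y) : ℝ × ℝ)) ((0 : ℝ), (1 : ℝ)) x :=
    (hasDerivAt_const x t).prodMk (hasDerivAt_id x)
  exact ((hg.differentiable (by simp) (t, x)).hasFDerivAt).comp_hasDerivAt x h1

lemma hasDerivAt_pdt {g : ℝ × ℝ → ℝ} (hg : ContDiff ℝ (⊤ : ℕ∞) g) (t x : ℝ) :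
    HasDerivAt (fun s => g (s, x)) (pdt g (t, x)) t := by
  have h1 : HasDerivAt (fun s : ℝ => ((s, x) : ℝ × ℝ)) ((1 : ℝ), (0 : ℝ)) t :=
    (hasDerivAt_id t).prodMk (hasDerivAt_const t x)
  exact ((hg.differentiable (by simp) (t, x)).hasFDerivAt).comp_hasDerivAt t h1

noncomputable def pdxI (g : ℝ × ℝ → ℝ) : ℕ → ℝ × ℝ → ℝ
  | 0 => g
  | n + 1 => pdx (pdxI g n)

lemma pdxI_contDiff {g : ℝ × ℝ → ℝ} (hg : ContDiff ℝ (⊤ : ℕ∞) g) (n : ℕ) : ContDiff ℝ (⊤ : ℕ∞) (pdxI g n) := by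
  induction n with
  | zero => exact hg
  | succ n ih => exact pdx_contDiff ih

lemma iteratedDeriv_eq_pdxI {g : ℝ × ℝ → ℝ} (hg : ContDiff ℝ (⊤ : ℕ∞) g) (n : ℕ) (t x : ℝ) :
    iteratedDeriv n (fun y => g (t, y)) x = pdxI g n (t, x) := by
  induction n generalizing x with
  | zero => simp [pdxI]
  | succ n ih =>
    rw [iteratedDeriv_succ]
    have : iteratedDeriv n (fun y => g (t, y)) = fun y => pdxI g n (t, y) := funext fun y => ih y
    rw [this]
    exact (hasDerivAt_pdx (pdxI_contDiff hg n) t x).deriv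

lemma integrable_decay (K : ℝ) : Integrable (fun x : ℝ => K / (1 + x ^ 2)) volume := by
  simpa [div_eq_mul_inv] using (integrable_inv_one_add_sq).const_mul K

lemma tendsto_decay_zero (K : ℝ) :
    Tendsto (fun x : ℝ => K / (1 + x ^ 2)) (cocompact ℝ) (nhds 0) := by
  have h1 : Tendsto (fun x : ℝ => 1 + x ^ 2) (cocompact ℝ) atTop := by
    have h2 : Tendsto (fun x : ℝ => x ^ 2) (cocompact ℝ) atTop := by
      have := tendsto_norm_cocompact_atTop (E := ℝ)
      have h3 : Tendsto (fun y : ℝ => y ^ 2) atTop atTop := tendsto_pow_atTop (two_ne_zero)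
      have := h3.comp this
      refine this.congr fun x => ?_
      simp [Real.norm_eq_abs, sq_abs]
    exact tendsto_atTop_add_const_left _ 1 h2
  exact Tendsto.div_atTop tendsto_const_nhds h1

/-- If `|F x| ≤ K / (1+x^2)` then `F → 0` at `atTop` and `atBot`. -/
lemma tendsto_zero_of_decay_s7 {F : ℝ → ℝ} {K : ℝ} (h : ∀ x, |F x| ≤ K / (1 + x ^ 2)) :
    Tendsto F atTop (nhds 0) ∧ Tendsto F atBot (nhds 0) := by
  have hc : Tendsto F (cocompact ℝ) (nhds 0) := by
    apply squeeze_zero_norm (fun x => by simpa using h x) (tendsto_decay_zero K)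
  rw [cocompact_eq_atBot_atTop] at hc
  exact ⟨hc.mono_left le_sup_right, hc.mono_left le_sup_left⟩

/-- ∫ over ℝ of a derivative of a function vanishing at ±∞ is zero. -/
lemma integral_deriv_eq_zero' {F F' : ℝ → ℝ} (hd : ∀ x, HasDerivAt F (F' x) x)
    (hi : Integrable F' volume) (ht : Tendsto F atTop (nhds 0))
    (hb : Tendsto F atBot (nhds 0)) : ∫ x : ℝ, F' x = 0 := by
  have h1 : ∫ x in Set.Ioi (0:ℝ), F' x = 0 - F 0 := by
    refine MeasureTheory.integral_Ioi_of_hasDerivAt_of_tendsto ?_ (fun x _ => hd x)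
      (hi.integrableOn) ht
    exact (hd 0).continuousAt.continuousWithinAt
  have h2 : ∫ x in Set.Iic (0:ℝ), F' x = F 0 - 0 := by
    refine MeasureTheory.integral_Iic_of_hasDerivAt_of_tendsto ?_ (fun x _ => hd x)
      (hi.integrableOn) hb
    exact (hd 0).continuousAt.continuousWithinAt
  have h3 : ∫ x : ℝ, F' x = (∫ x in Set.Iic (0:ℝ), F' x) + ∫ x in Set.Ioi (0:ℝ), F' x := by
    rw [← MeasureTheory.setIntegral_union (Set.Iic_disjoint_Ioi le_rfl) measurableSet_Ioi
      hi.integrableOn hi.integrableOn, Set.Iic_union_Ioi, MeasureTheory.setIntegral_univ]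
  rw [h3, h1, h2]; ring

/-- Cauchy–Schwarz for real integrals. -/
lemma abs_integral_mul_le_sqrt {μ : Measure ℝ} {a b : ℝ → ℝ}
    (ha : MemLp a 2 μ) (hb : MemLp b 2 μ) :
    |∫ x, a x * b x ∂μ| ≤ Real.sqrt (∫ x, a x ^ 2 ∂μ) * Real.sqrt (∫ x, b x ^ 2 ∂μ) := by
  have h2 : (ENNReal.ofReal (2:ℝ)) = 2 := by norm_num
  have key := MeasureTheory.integral_mul_norm_le_Lp_mul_Lq (μ := μ) (f := a) (g := b)
    (p := 2) (q := 2) ⟨by norm_num, by norm_num, by norm_num⟩ (by rw [h2]; exact ha) (by rw [h2]; exact hb)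
  have habs : |∫ x, a x * b x ∂μ| ≤ ∫ x, ‖a x‖ * ‖b x‖ ∂μ := by
    simpa [Real.norm_eq_abs, abs_mul] using norm_integral_le_integral_norm (μ := μ) (fun x => a x * b x)
  have e1 : ∫ x, ‖a x‖ ^ (2:ℝ) ∂μ = ∫ x, a x ^ 2 ∂μ := by
    refine integral_congr_ae (Eventually.of_forall fun x => ?_)
    simp only [Real.norm_eq_abs]
    rw [show ((2:ℝ)) = ((2:ℕ):ℝ) by norm_num, Real.rpow_natCast, sq_abs]
  have e2 : ∫ x, ‖b x‖ ^ (2:ℝ) ∂μ = ∫ x, b x ^ 2 ∂μ := by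
    refine integral_congr_ae (Eventually.of_forall fun x => ?_)
    simp only [Real.norm_eq_abs]
    rw [show ((2:ℝ)) = ((2:ℕ):ℝ) by norm_num, Real.rpow_natCast, sq_abs]
  rw [e1, e2] at key
  calc |∫ x, a x * b x ∂μ| ≤ ∫ x, ‖a x‖ * ‖b x‖ ∂μ := habs
    _ ≤ (∫ x, a x ^ 2 ∂μ) ^ (1/2:ℝ) * (∫ x, b x ^ 2 ∂μ) ^ (1/2:ℝ) := key
    _ = Real.sqrt (∫ x, a x ^ 2 ∂μ) * Real.sqrt (∫ x, b x ^ 2 ∂μ) := by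
        rw [Real.sqrt_eq_rpow, Real.sqrt_eq_rpow]

lemma integrable_of_bounded_decay {h₁ h₂ : ℝ → ℝ} {K₁ K₂ : ℝ}
    (hb : ∀ x, |h₁ x| ≤ K₁) (hd : ∀ x, |h₂ x| ≤ K₂ / (1 + x ^ 2))
    (hc1 : Continuous h₁) (hc2 : Continuous h₂) :
    Integrable (fun x => h₁ x * h₂ x) volume := by
  have hK₁ : 0 ≤ K₁ := le_trans (abs_nonneg _) (hb 0)
  refine Integrable.mono' (integrable_decay (K₁ * K₂)) 
    ((hc1.mul hc2).aestronglyMeasurable) (ae_of_all _ fun x => ?_)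
  have : |h₁ x * h₂ x| ≤ K₁ * (K₂ / (1 + x ^ 2)) := by
    rw [abs_mul]
    exact mul_le_mul (hb x) (hd x) (abs_nonneg _) hK₁
  calc ‖h₁ x * h₂ x‖ = |h₁ x * h₂ x| := rfl
    _ ≤ K₁ * (K₂ / (1 + x ^ 2)) := this
    _ = K₁ * K₂ / (1 + x ^ 2) := by ring

theorem stmt7
    (f : ℝ → ℝ) (hf : ContDiff ℝ (⊤ : ℕ∞) f)
    (c : ℝ) (hc : ∀ v : ℝ, |deriv f v| ≤ c)
    (ε δ : ℝ) (hε : 0 < ε) (hδ : 0 < δ)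
    (u : ℝ → ℝ → ℝ) (u₀ : ℝ → ℝ)
    (hu : ContDiff ℝ (⊤ : ℕ∞) (fun p : ℝ × ℝ => u p.1 p.2))
    (hu₀s : ContDiff ℝ (⊤ : ℕ∞) u₀)
    (hpde : ∀ t ≥ (0:ℝ), ∀ x : ℝ,
      deriv (fun s => u s x) t + deriv (fun y => f (u t y)) x
        = ε * iteratedDeriv 2 (u t) x + δ * iteratedDeriv 3 (u t) x)
    (hinit : u 0 = u₀)
    (hu₀L2 : MemLp u₀ 2 volume)
    (hu₀'L2 : MemLp (deriv u₀) 2 volume)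
    (hdecay : ∀ (n m : ℕ) (T : ℝ), ∃ C : ℝ, ∀ t ∈ Set.Icc (0:ℝ) T, ∀ x : ℝ,
      |x| ^ m * |iteratedDeriv n (u t) x| ≤ C)
    (U : ℝ → ℝ) (hU : ContDiff ℝ (⊤ : ℕ∞) U)
    (CU : ℝ) (hCU : ∀ v : ℝ, |deriv U v| ≤ CU)
    (T : ℝ) (hT : 0 < T)
    (θ : ℝ → ℝ → ℝ) (hθ : ContDiff ℝ (⊤ : ℕ∞) (fun p : ℝ × ℝ => θ p.1 p.2))
    (hθc : HasCompactSupport (fun p : ℝ × ℝ => θ p.1 p.2))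
    (hθsupp : ∀ t : ℝ, t ∉ Set.Icc (0:ℝ) T → ∀ x : ℝ, θ t x = 0)
    (Θ : ℝ) (hΘ : ∀ t ∈ Set.Icc (0:ℝ) T, Real.sqrt (∫ x : ℝ, (deriv (θ t) x) ^ 2) ≤ Θ) :
    |∫ t in Set.Ioi (0:ℝ), ∫ x : ℝ, ε * deriv U (u t x) * deriv (u t) x * deriv (θ t) x|
      ≤ CU * Θ * Real.sqrt (ε * T / 2) * Real.sqrt (∫ x : ℝ, (u₀ x) ^ 2) := by
  -- notation
  set g : ℝ × ℝ → ℝ := fun p => u p.1 p.2 with hgdef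
  have hc0 : 0 ≤ c := le_trans (abs_nonneg _) (hc 0)
  have hCU0 : 0 ≤ CU := le_trans (abs_nonneg _) (hCU 0)
  have hΘ0 : 0 ≤ Θ := le_trans (Real.sqrt_nonneg _) (hΘ 0 ⟨le_rfl, hT.le⟩)
  -- smoothness of slices
  have hut : ∀ t : ℝ, ContDiff ℝ (⊤ : ℕ∞) (u t) := by
    intro t
    exact hu.comp (((contDiff_const : ContDiff ℝ (⊤ : ℕ∞) fun _ : ℝ => t)).prodMk contDiff_id)
  have hutID : ∀ (n : ℕ) (t : ℝ), ContDiff ℝ ((⊤:ℕ∞) : WithTop ℕ∞) (iteratedDeriv n (u t)) := by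
    intro n t
    rw [iteratedDeriv_eq_iterate]
    exact ContDiff.iterate_deriv n ((hut t).of_le (by simp))
  have hDn : ∀ (n : ℕ) (t x : ℝ),
      HasDerivAt (iteratedDeriv n (u t)) (iteratedDeriv (n + 1) (u t) x) x := by
    intro n t x
    rw [iteratedDeriv_succ]
    exact (((hutID n t).differentiable (by simp)) x).hasDerivAt
  have hD0 : ∀ (t x : ℝ), HasDerivAt (u t) (deriv (u t) x) x := fun t x =>
    (((hut t).differentiable (by simp)) x).hasDerivAt
  have hD1 : ∀ (t x : ℝ), HasDerivAt (deriv (u t)) (iteratedDeriv 2 (u t) x) x := by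
    intro t x
    have := hDn 1 t x
    rwa [iteratedDeriv_one] at this
  have hD2 : ∀ (t x : ℝ), HasDerivAt (iteratedDeriv 2 (u t)) (iteratedDeriv 3 (u t) x) x :=
    fun t x => hDn 2 t x
  -- joint continuity of spatial derivatives
  have hux_eq : ∀ (t x : ℝ), deriv (u t) x = pdxI g 1 (t, x) := by
    intro t x
    have := iteratedDeriv_eq_pdxI (g := g) hu 1 t x
    rwa [iteratedDeriv_one] at this
  have hpdxI1c : Continuous (pdxI g 1) := (pdxI_contDiff hu 1).continuous
  -- decay bounds
  have hKall : ∀ n : ℕ, ∃ K : ℝ, 0 ≤ K ∧ ∀ t ∈ Set.Icc (0:ℝ) T, ∀ x : ℝ,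
      |iteratedDeriv n (u t) x| ≤ K / (1 + x ^ 2) := by
    intro n
    obtain ⟨C₀, hC₀⟩ := hdecay n 0 T
    obtain ⟨C₂, hC₂⟩ := hdecay n 2 T
    have h0T : (0:ℝ) ∈ Set.Icc (0:ℝ) T := ⟨le_rfl, hT.le⟩
    have hC₀0 : 0 ≤ C₀ := le_trans (by positivity) (hC₀ 0 h0T 0)
    have hC₂0 : 0 ≤ C₂ := le_trans (by positivity) (hC₂ 0 h0T 0)
    refine ⟨C₀ + C₂, by positivity, fun t ht x => ?_⟩
    have h1 : (1 + x ^ 2) * |iteratedDeriv n (u t) x| ≤ C₀ + C₂ := by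
      have e0 := hC₀ t ht x
      have e2 := hC₂ t ht x
      simp only [pow_zero, one_mul] at e0
      rw [sq_abs] at e2
      nlinarith [abs_nonneg (iteratedDeriv n (u t) x)]
    rw [le_div_iff₀ (by positivity)]
    linarith [h1]
  obtain ⟨K₀, hK₀0, hK₀⟩ := hKall 0
  obtain ⟨K₁, hK₁0, hK₁⟩ := hKall 1
  obtain ⟨K₂, hK₂0, hK₂⟩ := hKall 2
  obtain ⟨K₃, hK₃0, hK₃⟩ := hKall 3
  simp only [iteratedDeriv_zero] at hK₀
  simp only [iteratedDeriv_one] at hK₁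
  have hKb : ∀ (K : ℝ) (h : ℝ → ℝ), 0 ≤ K → (∀ x, |h x| ≤ K / (1 + x ^ 2)) →
      ∀ x, |h x| ≤ K := by
    intro K h hK hd x
    refine le_trans (hd x) ?_
    rw [div_le_iff₀ (by positivity)]
    nlinarith [sq_nonneg x]
  -- continuity facts
  have hcontu : ∀ t : ℝ, Continuous (u t) := fun t => (hut t).continuous
  have hcontID : ∀ (n : ℕ) (t : ℝ), Continuous (iteratedDeriv n (u t)) :=
    fun n t => (hutID n t).continuous
  have hcontux : ∀ t : ℝ, Continuous (deriv (u t)) := by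
    intro t
    have := hcontID 1 t
    rwa [iteratedDeriv_one] at this
  have hcontf' : Continuous (deriv f) := hf.continuous_deriv (by simp)
  -- time derivative via PDE
  have hpdt_eq : ∀ t ∈ Set.Icc (0:ℝ) T, ∀ x : ℝ,
      pdt g (t, x) = -(deriv f (u t x) * deriv (u t) x)
        + ε * iteratedDeriv 2 (u t) x + δ * iteratedDeriv 3 (u t) x := by
    intro t ht x
    have h1 : deriv (fun s => u s x) t = pdt g (t, x) := (hasDerivAt_pdt hu t x).deriv
    have h2 : deriv (fun y => f (u t y)) x = deriv f (u t x) * deriv (u t) x := by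
      exact HasDerivAt.deriv
        (((hf.differentiable (by simp) (u t x)).hasDerivAt).comp x (hD0 t x))
    have h3 := hpde t ht.1 x
    rw [h1, h2] at h3
    linarith
  -- product decay helper
  have hdecay_mul : ∀ (a b : ℝ → ℝ) (Ka Kb : ℝ), 0 ≤ Ka → (∀ x, |a x| ≤ Ka) →
      (∀ x, |b x| ≤ Kb / (1 + x ^ 2)) → ∀ x, |a x * b x| ≤ Ka * Kb / (1 + x ^ 2) := by
    intro a b Ka Kb hKa ha hb x
    rw [abs_mul]
    calc |a x| * |b x| ≤ Ka * (Kb / (1 + x ^ 2)) :=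
          mul_le_mul (ha x) (hb x) (abs_nonneg _) hKa
      _ = Ka * Kb / (1 + x ^ 2) := by ring
  -- integrability at fixed t ∈ [0,T]
  have hint_ux_sq : ∀ t ∈ Set.Icc (0:ℝ) T, Integrable (fun x => (deriv (u t) x) ^ 2) volume := by
    intro t ht
    have h := integrable_of_bounded_decay (hKb K₁ (deriv (u t)) hK₁0 (hK₁ t ht))
      (hK₁ t ht) (hcontux t) (hcontux t)
    have e : (fun x => deriv (u t) x * deriv (u t) x) = fun x => (deriv (u t) x) ^ 2 := by
      funext x; ring
    rwa [e] at h
  have hint_u_sq : ∀ t ∈ Set.Icc (0:ℝ) T, Integrable (fun x => (u t x) ^ 2) volume := by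
    intro t ht
    have h := integrable_of_bounded_decay (hKb K₀ (u t) hK₀0 (hK₀ t ht))
      (hK₀ t ht) (hcontu t) (hcontu t)
    have e : (fun x => u t x * u t x) = fun x => (u t x) ^ 2 := by funext x; ring
    rwa [e] at h
  have hint_u_uxx : ∀ t ∈ Set.Icc (0:ℝ) T,
      Integrable (fun x => u t x * iteratedDeriv 2 (u t) x) volume := fun t ht =>
    integrable_of_bounded_decay (hKb K₀ (u t) hK₀0 (hK₀ t ht)) (hK₂ t ht)
      (hcontu t) (hcontID 2 t)
  have hint_u_uxxx : ∀ t ∈ Set.Icc (0:ℝ) T,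
      Integrable (fun x => u t x * iteratedDeriv 3 (u t) x) volume := fun t ht =>
    integrable_of_bounded_decay (hKb K₀ (u t) hK₀0 (hK₀ t ht)) (hK₃ t ht)
      (hcontu t) (hcontID 3 t)
  have hint_ufu_ux : ∀ t ∈ Set.Icc (0:ℝ) T,
      Integrable (fun x => u t x * deriv f (u t x) * deriv (u t) x) volume := by
    intro t ht
    refine integrable_of_bounded_decay (h₁ := fun x => u t x * deriv f (u t x))
      (K₁ := K₀ * c) ?_ (hK₁ t ht) ((hcontu t).mul (hcontf'.comp (hcontu t))) (hcontux t)
    intro x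
    rw [abs_mul]
    exact mul_le_mul (hKb K₀ (u t) hK₀0 (hK₀ t ht) x) (hc _) (abs_nonneg _) hK₀0
  -- integration by parts B : ∫ u·u_xx = -∫ u_x²
  have hB : ∀ t ∈ Set.Icc (0:ℝ) T, ∫ x : ℝ, u t x * iteratedDeriv 2 (u t) x
      = - ∫ x : ℝ, (deriv (u t) x) ^ 2 := by
    intro t ht
    have hdA : ∀ x, HasDerivAt (fun y => u t y * deriv (u t) y)
        (deriv (u t) x * deriv (u t) x + u t x * iteratedDeriv 2 (u t) x) x :=
      fun x => (hD0 t x).mul (hD1 t x)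
    have hint1 : Integrable (fun x => deriv (u t) x * deriv (u t) x) volume := by
      have := hint_ux_sq t ht
      have e : (fun x => (deriv (u t) x) ^ 2) = fun x => deriv (u t) x * deriv (u t) x := by
        funext x; ring
      rwa [e] at this
    have htd := tendsto_zero_of_decay_s7 (K := K₀ * K₁)
      (hdecay_mul (u t) (deriv (u t)) K₀ K₁ hK₀0 (hKb K₀ (u t) hK₀0 (hK₀ t ht)) (hK₁ t ht))
    have hzero : ∫ x : ℝ, (deriv (u t) x * deriv (u t) x + u t x * iteratedDeriv 2 (u t) x)
        = 0 := integral_deriv_eq_zero' hdA (hint1.add (hint_u_uxx t ht)) htd.1 htd.2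
    rw [integral_add hint1 (hint_u_uxx t ht)] at hzero
    have e2 : ∫ x : ℝ, deriv (u t) x * deriv (u t) x = ∫ x : ℝ, (deriv (u t) x) ^ 2 := by
      congr 1; funext x; ring
    rw [e2] at hzero
    linarith
  -- integration by parts C : ∫ u·u_xxx = 0
  have hC3 : ∀ t ∈ Set.Icc (0:ℝ) T, ∫ x : ℝ, u t x * iteratedDeriv 3 (u t) x = 0 := by
    intro t ht
    have hdA : ∀ x, HasDerivAt
        (fun y => u t y * iteratedDeriv 2 (u t) y - (deriv (u t) y) ^ 2 / 2)
        (u t x * iteratedDeriv 3 (u t) x) x := by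
      intro x
      have h1 : HasDerivAt (fun y => u t y * iteratedDeriv 2 (u t) y - (deriv (u t) y) ^ 2 / 2)
          ((deriv (u t) x * iteratedDeriv 2 (u t) x + u t x * iteratedDeriv 3 (u t) x)
            - (2 * deriv (u t) x ^ 1 * iteratedDeriv 2 (u t) x) / 2) x :=
        ((hD0 t x).mul (hD2 t x)).sub (((hD1 t x).pow 2).div_const 2)
      have e : (deriv (u t) x * iteratedDeriv 2 (u t) x + u t x * iteratedDeriv 3 (u t) x)
            - (2 * deriv (u t) x ^ 1 * iteratedDeriv 2 (u t) x) / 2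
          = u t x * iteratedDeriv 3 (u t) x := by ring
      rwa [e] at h1
    have hbound : ∀ x : ℝ, |u t x * iteratedDeriv 2 (u t) x - (deriv (u t) x) ^ 2 / 2|
        ≤ (K₀ * K₂ + K₁ * K₁) / (1 + x ^ 2) := by
      intro x
      have h1 := hdecay_mul (u t) (iteratedDeriv 2 (u t)) K₀ K₂ hK₀0
        (hKb K₀ (u t) hK₀0 (hK₀ t ht)) (hK₂ t ht) x
      have h2 := hdecay_mul (deriv (u t)) (deriv (u t)) K₁ K₁ hK₁0
        (hKb K₁ (deriv (u t)) hK₁0 (hK₁ t ht)) (hK₁ t ht) x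
      have h3 : |u t x * iteratedDeriv 2 (u t) x - (deriv (u t) x) ^ 2 / 2|
          ≤ |u t x * iteratedDeriv 2 (u t) x| + |(deriv (u t) x) ^ 2 / 2| := abs_sub _ _
      have h4 : |(deriv (u t) x) ^ 2 / 2| = |deriv (u t) x * deriv (u t) x| / 2 := by
        rw [abs_div]; norm_num; congr 1; ring
      have hpos : (0:ℝ) < 1 + x ^ 2 := by positivity
      rw [h4] at h3
      have : |u t x * iteratedDeriv 2 (u t) x| + |deriv (u t) x * deriv (u t) x| / 2
          ≤ K₀ * K₂ / (1 + x ^ 2) + K₁ * K₁ / (1 + x ^ 2) := by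
        have := abs_nonneg (deriv (u t) x * deriv (u t) x)
        nlinarith [h1, h2]
      calc |u t x * iteratedDeriv 2 (u t) x - (deriv (u t) x) ^ 2 / 2|
          ≤ K₀ * K₂ / (1 + x ^ 2) + K₁ * K₁ / (1 + x ^ 2) := le_trans h3 this
        _ = (K₀ * K₂ + K₁ * K₁) / (1 + x ^ 2) := by ring
    have htd := tendsto_zero_of_decay_s7 hbound
    exact integral_deriv_eq_zero' hdA (hint_u_uxxx t ht) htd.1 htd.2
  -- integration by parts A : ∫ u·f'(u)·u_x = 0
  have hA : ∀ t ∈ Set.Icc (0:ℝ) T,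
      ∫ x : ℝ, u t x * deriv f (u t x) * deriv (u t) x = 0 := by
    intro t ht
    set G : ℝ → ℝ := fun v => ∫ w in (0:ℝ)..v, w * deriv f w with hGdef
    have hcint : Continuous (fun w : ℝ => w * deriv f w) := continuous_id.mul hcontf'
    have hG : ∀ v : ℝ, HasDerivAt G (v * deriv f v) v := by
      intro v
      exact intervalIntegral.integral_hasDerivAt_right
        (hcint.intervalIntegrable _ _) (hcint.stronglyMeasurableAtFilter _ _)
        hcint.continuousAt
    have hdA : ∀ x, HasDerivAt (fun y => G (u t y))
        (u t x * deriv f (u t x) * deriv (u t) x) x := by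
      intro x
      have h1 := (hG (u t x)).comp x (hD0 t x)
      have e : u t x * deriv f (u t x) * deriv (u t) x
          = u t x * deriv f (u t x) * deriv (u t) x := rfl
      exact h1
    have hu_td := tendsto_zero_of_decay_s7 (hK₀ t ht)
    have hGc : ContinuousAt G 0 := (hG 0).continuousAt
    have hG0 : G 0 = 0 := intervalIntegral.integral_same
    have htop : Tendsto (fun y => G (u t y)) atTop (nhds 0) := by
      have := hGc.tendsto.comp hu_td.1
      rwa [hG0] at this
    have hbot : Tendsto (fun y => G (u t y)) atBot (nhds 0) := by
      have := hGc.tendsto.comp hu_td.2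
      rwa [hG0] at this
    exact integral_deriv_eq_zero' hdA (hint_ufu_ux t ht) htop hbot
  -- the energy functional and the dissipation
  set Φ : ℝ → ℝ := fun t => ∫ x : ℝ, (u t x) ^ 2 with hΦdef
  set G2 : ℝ → ℝ := fun t => ∫ x : ℝ, (deriv (u t) x) ^ 2 with hG2def
  have hpdtc : Continuous (pdt g) := (pdt_contDiff hu).continuous
  have hG2nonneg : ∀ t, 0 ≤ G2 t := fun t => integral_nonneg fun x => sq_nonneg _
  have hΦnonneg : ∀ t, 0 ≤ Φ t := fun t => integral_nonneg fun x => sq_nonneg _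
  set Kt : ℝ := c * K₁ + ε * K₂ + δ * K₃ with hKtdef
  have hKt0 : 0 ≤ Kt := by positivity
  have hpdt_bound : ∀ t ∈ Set.Icc (0:ℝ) T, ∀ x : ℝ, |pdt g (t, x)| ≤ Kt / (1 + x ^ 2) := by
    intro t ht x
    rw [hpdt_eq t ht x]
    have e1 : |deriv f (u t x) * deriv (u t) x| ≤ c * K₁ / (1 + x ^ 2) := by
      rw [abs_mul]
      calc |deriv f (u t x)| * |deriv (u t) x| ≤ c * (K₁ / (1 + x ^ 2)) :=
            mul_le_mul (hc _) (hK₁ t ht x) (abs_nonneg _) hc0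
        _ = c * K₁ / (1 + x ^ 2) := by ring
    have e2 : |ε * iteratedDeriv 2 (u t) x| ≤ ε * K₂ / (1 + x ^ 2) := by
      rw [abs_mul, abs_of_pos hε]
      calc ε * |iteratedDeriv 2 (u t) x| ≤ ε * (K₂ / (1 + x ^ 2)) := by
            exact mul_le_mul_of_nonneg_left (hK₂ t ht x) hε.le
        _ = ε * K₂ / (1 + x ^ 2) := by ring
    have e3 : |δ * iteratedDeriv 3 (u t) x| ≤ δ * K₃ / (1 + x ^ 2) := by
      rw [abs_mul, abs_of_pos hδ]
      calc δ * |iteratedDeriv 3 (u t) x| ≤ δ * (K₃ / (1 + x ^ 2)) := by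
            exact mul_le_mul_of_nonneg_left (hK₃ t ht x) hδ.le
        _ = δ * K₃ / (1 + x ^ 2) := by ring
    calc |-(deriv f (u t x) * deriv (u t) x) + ε * iteratedDeriv 2 (u t) x
          + δ * iteratedDeriv 3 (u t) x|
        ≤ |-(deriv f (u t x) * deriv (u t) x) + ε * iteratedDeriv 2 (u t) x|
          + |δ * iteratedDeriv 3 (u t) x| := abs_add_le _ _
      _ ≤ (|-(deriv f (u t x) * deriv (u t) x)| + |ε * iteratedDeriv 2 (u t) x|)
          + |δ * iteratedDeriv 3 (u t) x| := by
            exact add_le_add (abs_add_le _ _) le_rfl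
      _ = |deriv f (u t x) * deriv (u t) x| + |ε * iteratedDeriv 2 (u t) x|
          + |δ * iteratedDeriv 3 (u t) x| := by rw [abs_neg]
      _ ≤ c * K₁ / (1 + x ^ 2) + ε * K₂ / (1 + x ^ 2) + δ * K₃ / (1 + x ^ 2) := by
            exact add_le_add (add_le_add e1 e2) e3
      _ = Kt / (1 + x ^ 2) := by rw [hKtdef]; ring
  have hΦ' : ∀ t₀ ∈ Set.Ioo (0:ℝ) T, HasDerivAt Φ (-(2 * ε) * G2 t₀) t₀ := by
    intro t₀ ht₀
    have ht₀Icc : t₀ ∈ Set.Icc (0:ℝ) T := ⟨ht₀.1.le, ht₀.2.le⟩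
    have hr : 0 < min t₀ (T - t₀) := lt_min ht₀.1 (by linarith [ht₀.2])
    have hball : Metric.ball t₀ (min t₀ (T - t₀)) ⊆ Set.Icc (0:ℝ) T := by
      intro s hs
      rw [Metric.mem_ball, Real.dist_eq] at hs
      have h1 := abs_lt.mp hs
      have h2 := min_le_left t₀ (T - t₀)
      have h3 := min_le_right t₀ (T - t₀)
      constructor <;> [linarith [h1.1]; linarith [h1.2]]
    have key := hasDerivAt_integral_of_dominated_loc_of_deriv_le
      (F := fun t x => (u t x) ^ 2) (F' := fun t x => 2 * u t x * pdt g (t, x))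
      (x₀ := t₀) (bound := fun x => 2 * K₀ * Kt / (1 + x ^ 2)) (μ := volume) (Metric.ball_mem_nhds t₀ hr)
      (Eventually.of_forall fun t => (((hcontu t).pow 2).aestronglyMeasurable))
      (hint_u_sq t₀ ht₀Icc)
      (((continuous_const.mul (hcontu t₀)).mul
        (hpdtc.comp (continuous_const.prodMk continuous_id))).aestronglyMeasurable)
      (ae_of_all _ fun x t htb => ?_) (integrable_decay _)
      (ae_of_all _ fun x t htb => ?_)
    · have hval : ∫ x : ℝ, 2 * u t₀ x * pdt g (t₀, x) = -(2 * ε) * G2 t₀ := by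
        have e : ∀ x : ℝ, 2 * u t₀ x * pdt g (t₀, x)
            = (-2) * (u t₀ x * deriv f (u t₀ x) * deriv (u t₀) x)
              + ((2 * ε) * (u t₀ x * iteratedDeriv 2 (u t₀) x)
              + (2 * δ) * (u t₀ x * iteratedDeriv 3 (u t₀) x)) := by
          intro x
          rw [hpdt_eq t₀ ht₀Icc x]
          ring
        have i1 : Integrable (fun x : ℝ =>
            (-2:ℝ) * (u t₀ x * deriv f (u t₀ x) * deriv (u t₀) x)) volume :=
          (hint_ufu_ux t₀ ht₀Icc).const_mul _
        have i2 : Integrable (fun x : ℝ =>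
            (2*ε) * (u t₀ x * iteratedDeriv 2 (u t₀) x)) volume :=
          (hint_u_uxx t₀ ht₀Icc).const_mul _
        have i3 : Integrable (fun x : ℝ =>
            (2*δ) * (u t₀ x * iteratedDeriv 3 (u t₀) x)) volume :=
          (hint_u_uxxx t₀ ht₀Icc).const_mul _
        have i23 : Integrable (fun x : ℝ => (2*ε) * (u t₀ x * iteratedDeriv 2 (u t₀) x)
            + (2*δ) * (u t₀ x * iteratedDeriv 3 (u t₀) x)) volume := i2.add i3
        rw [integral_congr_ae (Eventually.of_forall e), integral_add i1 i23,
          integral_add i2 i3, MeasureTheory.integral_const_mul, MeasureTheory.integral_const_mul, MeasureTheory.integral_const_mul,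
          hA t₀ ht₀Icc, hB t₀ ht₀Icc, hC3 t₀ ht₀Icc]
        ring
      rw [← hval]
      exact key.2
    · -- bound
      have htIcc := hball htb
      rw [Real.norm_eq_abs, abs_mul, abs_mul, abs_two]
      calc 2 * |u t x| * |pdt g (t, x)| ≤ 2 * K₀ * (Kt / (1 + x ^ 2)) := by
            have h1 := hKb K₀ (u t) hK₀0 (hK₀ t htIcc) x
            have h2 := hpdt_bound t htIcc x
            have h3 : (0:ℝ) ≤ |pdt g (t, x)| := abs_nonneg _
            nlinarith [abs_nonneg (u t x)]
        _ = 2 * K₀ * Kt / (1 + x ^ 2) := by ring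
    · -- differentiability in t
      have h1 := (hasDerivAt_pdt hu t x).pow 2
      have e : (2:ℕ) * (u t x) ^ (2 - 1) * pdt g (t, x) = 2 * u t x * pdt g (t, x) := by
        norm_num
      rw [e] at h1
      exact h1
  -- continuity of Φ and G2 on [0,T]
  have hΦcont : ContinuousOn Φ (Set.Icc (0:ℝ) T) := by
    intro t₀ ht₀
    refine continuousWithinAt_of_dominated (bound := fun x => K₀ * K₀ / (1 + x ^ 2))
      (Eventually.of_forall fun t => ((hcontu t).pow 2).aestronglyMeasurable) ?_
      (integrable_decay _) (ae_of_all _ fun x => ?_)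
    · filter_upwards [self_mem_nhdsWithin] with t ht
      refine ae_of_all _ fun x => ?_
      have h1 := hdecay_mul (u t) (u t) K₀ K₀ hK₀0 (hKb K₀ (u t) hK₀0 (hK₀ t ht)) (hK₀ t ht) x
      calc ‖(u t x) ^ 2‖ = |u t x * u t x| := by rw [Real.norm_eq_abs]; congr 1; ring
        _ ≤ K₀ * K₀ / (1 + x ^ 2) := h1
    · have hcg : Continuous (fun t : ℝ => u t x) :=
        hu.continuous.comp (continuous_id.prodMk continuous_const)
      exact ((hcg.pow 2).continuousAt).continuousWithinAt
  have hG2cont : ContinuousOn G2 (Set.Icc (0:ℝ) T) := by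
    intro t₀ ht₀
    refine continuousWithinAt_of_dominated (bound := fun x => K₁ * K₁ / (1 + x ^ 2))
      (Eventually.of_forall fun t => ((hcontux t).pow 2).aestronglyMeasurable) ?_
      (integrable_decay _) (ae_of_all _ fun x => ?_)
    · filter_upwards [self_mem_nhdsWithin] with t ht
      refine ae_of_all _ fun x => ?_
      have h1 := hdecay_mul (deriv (u t)) (deriv (u t)) K₁ K₁ hK₁0
        (hKb K₁ (deriv (u t)) hK₁0 (hK₁ t ht)) (hK₁ t ht) x
      calc ‖(deriv (u t) x) ^ 2‖ = |deriv (u t) x * deriv (u t) x| := by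
            rw [Real.norm_eq_abs]; congr 1; ring
        _ ≤ K₁ * K₁ / (1 + x ^ 2) := h1
    · have hcg : Continuous (fun t : ℝ => deriv (u t) x) := by
        have e : (fun t : ℝ => deriv (u t) x) = fun t : ℝ => pdxI g 1 (t, x) := by
          funext t; exact hux_eq t x
        rw [e]
        exact hpdxI1c.comp (continuous_id.prodMk continuous_const)
      exact (hcg.pow 2).continuousAt.continuousWithinAt
  -- fundamental theorem of calculus : energy identity
  have hG2ii : IntervalIntegrable G2 volume 0 T := by
    apply ContinuousOn.intervalIntegrable
    rwa [Set.uIcc_of_le hT.le]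
  have hii : IntervalIntegrable (fun t => -(2 * ε) * G2 t) volume 0 T := by
    apply ContinuousOn.intervalIntegrable
    rw [Set.uIcc_of_le hT.le]
    exact continuousOn_const.mul hG2cont
  have hFTC : ∫ t in (0:ℝ)..T, (-(2 * ε) * G2 t) = Φ T - Φ 0 :=
    intervalIntegral.integral_eq_sub_of_hasDeriv_right_of_le hT.le hΦcont
      (fun t ht => (hΦ' t ht).hasDerivWithinAt) hii
  have hEnergy : ∫ t in (0:ℝ)..T, G2 t ≤ Φ 0 / (2 * ε) := by
    rw [intervalIntegral.integral_const_mul] at hFTC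
    rw [le_div_iff₀ (by positivity)]
    have hΦT := hΦnonneg T
    nlinarith [hFTC]
  have hΦ0 : Φ 0 = ∫ x : ℝ, (u₀ x) ^ 2 := by
    have : Φ 0 = ∫ x : ℝ, (u 0 x) ^ 2 := rfl
    rw [this, hinit]
  -- θ machinery
  set Dθ : ℝ × ℝ → ℝ := pdx (fun p : ℝ × ℝ => θ p.1 p.2) with hDθdef
  have hDθc : Continuous Dθ := (pdx_contDiff hθ).continuous
  have hderivθ : ∀ t x : ℝ, deriv (θ t) x = Dθ (t, x) := fun t x => (hasDerivAt_pdx hθ t x).deriv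
  have hDθcs : HasCompactSupport Dθ := by
    have h1 : HasCompactSupport (fderiv ℝ (fun p : ℝ × ℝ => θ p.1 p.2)) :=
      hθc.fderiv (𝕜 := ℝ)
    exact h1.comp_left (g := fun L : ℝ × ℝ →L[ℝ] ℝ => L ((0:ℝ), (1:ℝ))) rfl
  obtain ⟨Mθ, hMθ⟩ : ∃ M : ℝ, ∀ p, |Dθ p| ≤ M := by
    obtain ⟨M, hM⟩ := hDθc.bounded_above_of_compact_support hDθcs
    exact ⟨M, fun p => by simpa [Real.norm_eq_abs] using hM p⟩
  have hMθ0 : 0 ≤ Mθ := le_trans (abs_nonneg _) (hMθ (0, 0))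
  have hcontθx : ∀ t : ℝ, Continuous (deriv (θ t)) := by
    intro t
    have e : deriv (θ t) = fun x => Dθ (t, x) := funext (hderivθ t)
    rw [e]
    exact hDθc.comp (continuous_const.prodMk continuous_id)
  have hbcs : ∀ t : ℝ, HasCompactSupport (deriv (θ t)) := by
    intro t
    have hiso : Isometry (fun x : ℝ => ((t, x) : ℝ × ℝ)) := by
      intro x y
      simp [Prod.edist_eq]
    have e : deriv (θ t) = (fun p => Dθ p) ∘ (fun x : ℝ => ((t, x) : ℝ × ℝ)) :=
      funext (hderivθ t)
    rw [e]
    exact hDθcs.comp_isClosedEmbedding hiso.isClosedEmbedding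
  have hbmem : ∀ t : ℝ, MemLp (deriv (θ t)) 2 volume := by
    intro t
    refine (memLp_two_iff_integrable_sq (hcontθx t).aestronglyMeasurable).mpr ?_
    refine Continuous.integrable_of_hasCompactSupport ((hcontθx t).pow 2) ?_
    exact (hbcs t).comp_left (g := fun y : ℝ => y ^ 2) (by norm_num)
  have hamem : ∀ t ∈ Set.Icc (0:ℝ) T,
      MemLp (fun x => deriv U (u t x) * deriv (u t) x) 2 volume := by
    intro t ht
    have hca : Continuous (fun x => deriv U (u t x) * deriv (u t) x) :=
      ((hU.continuous_deriv (by simp)).comp (hcontu t)).mul (hcontux t)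
    refine (memLp_two_iff_integrable_sq hca.aestronglyMeasurable).mpr ?_
    refine Integrable.mono' (integrable_decay ((CU * K₁) * (CU * K₁)))
      ((hca.pow 2).aestronglyMeasurable) (ae_of_all _ fun x => ?_)
    have b1 : |deriv U (u t x) * deriv (u t) x| ≤ CU * (K₁ / (1 + x ^ 2)) := by
      rw [abs_mul]
      exact mul_le_mul (hCU _) (hK₁ t ht x) (abs_nonneg _) hCU0
    have b2 : |deriv U (u t x) * deriv (u t) x| ≤ CU * K₁ := by
      refine le_trans b1 (mul_le_mul_of_nonneg_left ?_ hCU0)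
      rw [div_le_iff₀ (by positivity)]
      nlinarith [sq_nonneg x]
    calc ‖(deriv U (u t x) * deriv (u t) x) ^ 2‖
        = |deriv U (u t x) * deriv (u t) x| * |deriv U (u t x) * deriv (u t) x| := by
          rw [Real.norm_eq_abs, ← abs_mul]; congr 1; ring
      _ ≤ (CU * K₁) * (CU * (K₁ / (1 + x ^ 2))) :=
          mul_le_mul b2 b1 (abs_nonneg _) (by positivity)
      _ = (CU * K₁) * (CU * K₁) / (1 + x ^ 2) := by ring
  -- the inner-integral function of time
  set F : ℝ → ℝ := fun t => ∫ x : ℝ, ε * deriv U (u t x) * deriv (u t) x * deriv (θ t) x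
    with hFdef
  -- fixed-time Cauchy-Schwarz estimate
  have hCS : ∀ t ∈ Set.Icc (0:ℝ) T, |F t| ≤ ε * CU * Θ * Real.sqrt (G2 t) := by
    intro t ht
    have ea : F t = ε * ∫ x : ℝ, (deriv U (u t x) * deriv (u t) x) * deriv (θ t) x := by
      show (∫ x : ℝ, ε * deriv U (u t x) * deriv (u t) x * deriv (θ t) x) = _
      rw [← MeasureTheory.integral_const_mul]
      congr 1
      funext x
      ring
    have hcs := abs_integral_mul_le_sqrt (hamem t ht) (hbmem t)
    have hintasq : Integrable (fun x => (deriv U (u t x) * deriv (u t) x) ^ 2) volume :=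
      (hamem t ht).integrable_sq
    have h2 : ∫ x : ℝ, (deriv U (u t x) * deriv (u t) x) ^ 2 ≤ CU ^ 2 * G2 t := by
      have hint2 : Integrable (fun x => CU ^ 2 * (deriv (u t) x) ^ 2) volume :=
        (hint_ux_sq t ht).const_mul _
      have hmono := integral_mono hintasq hint2 (fun x => by
        have hb := abs_le.mp (hCU (u t x))
        have h5 : (deriv U (u t x)) ^ 2 ≤ CU ^ 2 := sq_le_sq' hb.1 hb.2
        calc (deriv U (u t x) * deriv (u t) x) ^ 2
            = (deriv U (u t x)) ^ 2 * (deriv (u t) x) ^ 2 := by ring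
          _ ≤ CU ^ 2 * (deriv (u t) x) ^ 2 :=
              mul_le_mul_of_nonneg_right h5 (sq_nonneg _))
      rw [MeasureTheory.integral_const_mul] at hmono
      exact hmono
    have h3 : Real.sqrt (∫ x : ℝ, (deriv U (u t x) * deriv (u t) x) ^ 2)
        ≤ CU * Real.sqrt (G2 t) := by
      calc Real.sqrt (∫ x : ℝ, (deriv U (u t x) * deriv (u t) x) ^ 2)
          ≤ Real.sqrt (CU ^ 2 * G2 t) := Real.sqrt_le_sqrt h2
        _ = CU * Real.sqrt (G2 t) := by
            rw [Real.sqrt_mul (sq_nonneg CU), Real.sqrt_sq hCU0]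
    have h4 : Real.sqrt (∫ x : ℝ, (deriv (θ t) x) ^ 2) ≤ Θ := hΘ t ht
    calc |F t| = ε * |∫ x : ℝ, (deriv U (u t x) * deriv (u t) x) * deriv (θ t) x| := by
          rw [ea, abs_mul, abs_of_pos hε]
      _ ≤ ε * (Real.sqrt (∫ x : ℝ, (deriv U (u t x) * deriv (u t) x) ^ 2)
            * Real.sqrt (∫ x : ℝ, (deriv (θ t) x) ^ 2)) :=
          mul_le_mul_of_nonneg_left hcs hε.le
      _ ≤ ε * ((CU * Real.sqrt (G2 t)) * Θ) := by
          refine mul_le_mul_of_nonneg_left ?_ hε.le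
          exact mul_le_mul h3 h4 (Real.sqrt_nonneg _) (by positivity)
      _ = ε * CU * Θ * Real.sqrt (G2 t) := by ring
  -- F vanishes outside [0,T]
  have hFzero : ∀ t : ℝ, t ∉ Set.Icc (0:ℝ) T → F t = 0 := by
    intro t ht
    have hθt : θ t = fun _ => (0:ℝ) := funext (hθsupp t ht)
    have hz : ∀ x : ℝ, deriv (θ t) x = 0 := by
      intro x
      rw [hθt]
      exact deriv_const x 0
    show (∫ x : ℝ, ε * deriv U (u t x) * deriv (u t) x * deriv (θ t) x) = 0
    have e : (fun x : ℝ => ε * deriv U (u t x) * deriv (u t) x * deriv (θ t) x)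
        = fun _ => (0:ℝ) := by
      funext x
      rw [hz x]
      ring
    rw [e, integral_zero]
  -- continuity of F on [0,T]
  have hFcont : ContinuousOn F (Set.Icc (0:ℝ) T) := by
    intro t₀ ht₀
    refine continuousWithinAt_of_dominated
      (bound := fun x => ε * (CU * K₁ * Mθ) / (1 + x ^ 2)) ?_ ?_ (integrable_decay _)
      (ae_of_all _ fun x => ?_)
    · refine Eventually.of_forall fun t => ?_
      exact (((continuous_const.mul
        ((hU.continuous_deriv (by simp)).comp (hcontu t))).mul (hcontux t)).mul
        (hcontθx t)).aestronglyMeasurable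
    · filter_upwards [self_mem_nhdsWithin] with t ht
      refine ae_of_all _ fun x => ?_
      have b1 : |deriv U (u t x)| ≤ CU := hCU _
      have b2 : |deriv (u t) x| ≤ K₁ / (1 + x ^ 2) := hK₁ t ht x
      have b3 : |deriv (θ t) x| ≤ Mθ := by rw [hderivθ t x]; exact hMθ _
      calc ‖ε * deriv U (u t x) * deriv (u t) x * deriv (θ t) x‖
          = ε * (|deriv U (u t x)| * |deriv (u t) x| * |deriv (θ t) x|) := by
            rw [Real.norm_eq_abs, abs_mul, abs_mul, abs_mul, abs_of_pos hε]; ring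
        _ ≤ ε * ((CU * (K₁ / (1 + x ^ 2))) * Mθ) := by
            refine mul_le_mul_of_nonneg_left ?_ hε.le
            exact mul_le_mul (mul_le_mul b1 b2 (abs_nonneg _) hCU0) b3 (abs_nonneg _)
              (by positivity)
        _ = ε * (CU * K₁ * Mθ) / (1 + x ^ 2) := by ring
    · have e : (fun t : ℝ => ε * deriv U (u t x) * deriv (u t) x * deriv (θ t) x)
          = fun t : ℝ => ε * deriv U (u t x) * pdxI g 1 (t, x) * Dθ (t, x) := by
        funext t
        rw [hux_eq t x, hderivθ t x]
      rw [e]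
      have hcg : Continuous (fun t : ℝ => u t x) :=
        hu.continuous.comp (continuous_id.prodMk continuous_const)
      exact (((continuous_const.mul
        ((hU.continuous_deriv (by simp)).comp hcg)).mul
        (hpdxI1c.comp (continuous_id.prodMk continuous_const))).mul
        (hDθc.comp (continuous_id.prodMk continuous_const))).continuousAt.continuousWithinAt
  -- integrability of F on pieces
  have hFIccInt : IntegrableOn F (Set.Icc (0:ℝ) T) volume :=
    hFcont.integrableOn_compact isCompact_Icc
  have hFIocInt : IntegrableOn F (Set.Ioc (0:ℝ) T) volume :=
    hFIccInt.mono_set Set.Ioc_subset_Icc_self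
  have hEqOn : Set.EqOn F (fun _ => (0:ℝ)) (Set.Ioi T) := by
    intro t ht
    exact hFzero t (fun hmem => absurd hmem.2 (not_le.mpr ht))
  have hFIoiTInt : IntegrableOn F (Set.Ioi T) volume := by
    rw [integrableOn_congr_fun hEqOn measurableSet_Ioi]
    exact integrableOn_zero
  have hsplit : ∫ t in Set.Ioi (0:ℝ), F t = ∫ t in Set.Ioc (0:ℝ) T, F t := by
    rw [← Set.Ioc_union_Ioi_eq_Ioi hT.le,
      setIntegral_union (Set.Ioc_disjoint_Ioi le_rfl) measurableSet_Ioi hFIocInt hFIoiTInt]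
    have hz : ∫ t in Set.Ioi T, F t = 0 := by
      rw [setIntegral_congr_fun measurableSet_Ioi hEqOn]
      simp
    rw [hz, add_zero]
  -- bound the Ioc integral
  have hsqrtG2cont : ContinuousOn (fun t => Real.sqrt (G2 t)) (Set.Icc (0:ℝ) T) :=
    Real.continuous_sqrt.comp_continuousOn hG2cont
  have hrhsInt : IntegrableOn (fun t => ε * CU * Θ * Real.sqrt (G2 t))
      (Set.Ioc (0:ℝ) T) volume :=
    ((continuousOn_const.mul hsqrtG2cont).integrableOn_compact isCompact_Icc).mono_set
      Set.Ioc_subset_Icc_self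
  have hmain1 : |∫ t in Set.Ioc (0:ℝ) T, F t|
      ≤ ∫ t in Set.Ioc (0:ℝ) T, ε * CU * Θ * Real.sqrt (G2 t) := by
    calc |∫ t in Set.Ioc (0:ℝ) T, F t| ≤ ∫ t in Set.Ioc (0:ℝ) T, |F t| := by
          simpa [Real.norm_eq_abs] using
            norm_integral_le_integral_norm (μ := volume.restrict (Set.Ioc (0:ℝ) T)) F
      _ ≤ ∫ t in Set.Ioc (0:ℝ) T, ε * CU * Θ * Real.sqrt (G2 t) := by
          refine setIntegral_mono_on hFIocInt.abs hrhsInt measurableSet_Ioc fun t ht => ?_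
          exact hCS t (Set.Ioc_subset_Icc_self ht)
  -- Cauchy-Schwarz in time
  haveI hfin : IsFiniteMeasure (volume.restrict (Set.Ioc (0:ℝ) T)) :=
    ⟨by rw [Measure.restrict_apply_univ]; exact measure_Ioc_lt_top⟩
  have hsqmeas : AEStronglyMeasurable (fun t => Real.sqrt (G2 t))
      (volume.restrict (Set.Ioc (0:ℝ) T)) :=
    ((hsqrtG2cont.mono Set.Ioc_subset_Icc_self).aestronglyMeasurable measurableSet_Ioc)
  have hsqsq : (fun t => (Real.sqrt (G2 t)) ^ 2) = G2 := by
    funext t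
    exact Real.sq_sqrt (hG2nonneg t)
  have hG2IocInt : IntegrableOn G2 (Set.Ioc (0:ℝ) T) volume :=
    (hG2cont.integrableOn_compact isCompact_Icc).mono_set Set.Ioc_subset_Icc_self
  have hsqmem : MemLp (fun t => Real.sqrt (G2 t)) 2 (volume.restrict (Set.Ioc (0:ℝ) T)) := by
    refine (memLp_two_iff_integrable_sq hsqmeas).mpr ?_
    rw [hsqsq]
    exact hG2IocInt
  have honemem : MemLp (fun _ : ℝ => (1:ℝ)) 2 (volume.restrict (Set.Ioc (0:ℝ) T)) :=
    memLp_const 1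
  have hcs2 := abs_integral_mul_le_sqrt hsqmem honemem
  have e1 : ∫ t in Set.Ioc (0:ℝ) T, Real.sqrt (G2 t) * 1 = ∫ t in Set.Ioc (0:ℝ) T,
      Real.sqrt (G2 t) := by simp
  have e2 : ∫ t in Set.Ioc (0:ℝ) T, ((1:ℝ)) ^ 2 = T := by
    simp [Real.volume_Ioc, ENNReal.toReal_ofReal hT.le, hT.le]
  have e3 : ∫ t in Set.Ioc (0:ℝ) T, (Real.sqrt (G2 t)) ^ 2 = ∫ t in Set.Ioc (0:ℝ) T, G2 t := by
    refine integral_congr_ae (Eventually.of_forall fun t => ?_)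
    exact Real.sq_sqrt (hG2nonneg t)
  rw [e1, e2, e3] at hcs2
  have htime : ∫ t in Set.Ioc (0:ℝ) T, Real.sqrt (G2 t)
      ≤ Real.sqrt (∫ t in Set.Ioc (0:ℝ) T, G2 t) * Real.sqrt T :=
    le_trans (le_abs_self _) hcs2
  have hIocG2 : ∫ t in Set.Ioc (0:ℝ) T, G2 t ≤ Φ 0 / (2 * ε) := by
    rw [← intervalIntegral.integral_of_le hT.le]
    exact hEnergy
  -- assemble
  have hfinal1 : ∫ t in Set.Ioc (0:ℝ) T, ε * CU * Θ * Real.sqrt (G2 t)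
      ≤ ε * CU * Θ * (Real.sqrt (Φ 0 / (2 * ε)) * Real.sqrt T) := by
    rw [MeasureTheory.integral_const_mul]
    refine mul_le_mul_of_nonneg_left ?_ (by positivity)
    calc ∫ t in Set.Ioc (0:ℝ) T, Real.sqrt (G2 t)
        ≤ Real.sqrt (∫ t in Set.Ioc (0:ℝ) T, G2 t) * Real.sqrt T := htime
      _ ≤ Real.sqrt (Φ 0 / (2 * ε)) * Real.sqrt T :=
          mul_le_mul_of_nonneg_right (Real.sqrt_le_sqrt hIocG2) (Real.sqrt_nonneg _)
  have halg : ε * CU * Θ * (Real.sqrt (Φ 0 / (2 * ε)) * Real.sqrt T)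
      = CU * Θ * Real.sqrt (ε * T / 2) * Real.sqrt (Φ 0) := by
    have h6 : Real.sqrt (ε * T / 2) = ε * Real.sqrt T / Real.sqrt (2 * ε) := by
      rw [show ε * T / 2 = ε ^ 2 * T / (2 * ε) by field_simp,
        Real.sqrt_div (by positivity), Real.sqrt_mul (sq_nonneg ε), Real.sqrt_sq hε.le]
    have h7 : Real.sqrt (Φ 0 / (2 * ε)) = Real.sqrt (Φ 0) / Real.sqrt (2 * ε) :=
      Real.sqrt_div (hΦnonneg 0) _
    have h8 : Real.sqrt (2 * ε) ≠ 0 := by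
      refine Real.sqrt_ne_zero'.mpr (by positivity)
    rw [h6, h7]
    field_simp
  have hΦ0' : Real.sqrt (Φ 0) = Real.sqrt (∫ x : ℝ, (u₀ x) ^ 2) := by rw [hΦ0]
  calc |∫ t in Set.Ioi (0:ℝ), F t| = |∫ t in Set.Ioc (0:ℝ) T, F t| := by rw [hsplit]
    _ ≤ ∫ t in Set.Ioc (0:ℝ) T, ε * CU * Θ * Real.sqrt (G2 t) := hmain1
    _ ≤ ε * CU * Θ * (Real.sqrt (Φ 0 / (2 * ε)) * Real.sqrt T) := hfinal1
    _ = CU * Θ * Real.sqrt (ε * T / 2) * Real.sqrt (Φ 0) := halg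
    _ = CU * Θ * Real.sqrt (ε * T / 2) * Real.sqrt (∫ x : ℝ, (u₀ x) ^ 2) := by rw [hΦ0']
end
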